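/- arXiv:1811.04563 — 9 statements merged into one kernel-verified Lean document; each statement's English description precedes it below -/
import Mathlib

section
/- Let $p_1,\dots,p_k$ be distinct primes, and for each $i$ let $r_i \ge 1$ and $1 \le \alpha_{i1} \le \cdots \le \alpha_{i r_i}$ be integers. Let $G = \prod_{i=1}^k \prod_{j=1}^{r_i} \mathbb{Z}/p_i^{\alpha_{ij}}\mathbb{Z}$ (a finite abelian group in primary decomposition). Then $$\prod_{i=1}^k \ \sum_{\substack{1 \le m_i \le p_i^{\alpha_{i r_i}} \\ p_i \nmid m_i}} \ \prod_{j=1}^{r_i} \gcd(m_i - 1,\, p_i^{\alpha_{ij}}) \,=\, \varphi(\exp(G)) \cdot |L_1(G)|,$$ where $\exp(G)$ is the exponent of $G$, $\varphi$ is Euler's totient function, and $|L_1(G)|$ is the number of cyclic subgroups of $G$. -/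
/-!
If `n` kills `G`, the units of `ZMod n` act on `G` and the orbit of `x` is the set of generators
of `⟨x⟩`, so Burnside's lemma gives `∑ u, |Fix u| = φ(n) · |L₁(G)|`. Take `n = exp G = ∏ pᵢ^αᵢᵣᵢ`.
By the Chinese remainder theorem a unit mod `n` is a tuple of residues `mᵢ` prime to `pᵢ`, and
`x ↦ m • x` fixes exactly `gcd(m - 1, N)` elements of `ZMod N`; multiplying over the cyclic
factors turns the Burnside sum into the left-hand side.
-/

open Finset Function

section ZModModule

variable {n : ℕ} {G : Type*} [AddCommGroup G] [Module (ZMod n) G]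

theorem ZMod.smul_eq_val_nsmul [NeZero n] (c : ZMod n) (x : G) : c • x = c.val • x := by
  rw [← Nat.cast_smul_eq_nsmul (ZMod n), ZMod.natCast_zmod_val]

theorem zmultiples_units_smul [NeZero n] (u : (ZMod n)ˣ) (x : G) :
    AddSubgroup.zmultiples (u • x) = AddSubgroup.zmultiples x := by
  have mem : ∀ (v : (ZMod n)ˣ) (y : G), v • y ∈ AddSubgroup.zmultiples y := fun v y => by
    rw [Units.smul_def, ZMod.smul_eq_val_nsmul]
    exact AddSubgroup.nsmul_mem_zmultiples _ _
  refine le_antisymm (AddSubgroup.zmultiples_le_of_mem (mem u x)) ?_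
  exact AddSubgroup.zmultiples_le_of_mem (by simpa using mem u⁻¹ (u • x))

theorem exists_units_smul_eq_of_zmultiples_eq [NeZero n] [Finite G] {a b : G}
    (h : AddSubgroup.zmultiples a = AddSubgroup.zmultiples b) :
    ∃ u : (ZMod n)ˣ, u • b = a := by
  obtain ⟨k, rfl⟩ : ∃ k : ℕ, k • b = a :=
    mem_multiples_iff_mem_zmultiples.mpr (h ▸ AddSubgroup.mem_zmultiples a)
  obtain ⟨l, hl⟩ : ∃ l : ℕ, l • k • b = b :=
    mem_multiples_iff_mem_zmultiples.mpr (h.symm ▸ AddSubgroup.mem_zmultiples b)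
  have hdvd : addOrderOf b ∣ n := addOrderOf_dvd_of_nsmul_eq_zero <| by
    rw [← Nat.cast_smul_eq_nsmul (ZMod n), ZMod.natCast_self, zero_smul]
  have hunit : IsUnit (k : ZMod (addOrderOf b)) := by
    refine .of_mul_eq_one_right (l : ZMod (addOrderOf b)) ?_
    have hlk : (l * k) • b = 1 • b := by rwa [one_nsmul, ← smul_eq_mul, smul_assoc]
    rw [nsmul_eq_nsmul_iff_modEq, ← ZMod.natCast_eq_natCast_iff] at hlk
    exact_mod_cast hlk
  obtain ⟨u, hu⟩ := ZMod.unitsMap_surjective hdvd hunit.unit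
  refine ⟨u, ?_⟩
  rw [Units.smul_def, ZMod.smul_eq_val_nsmul, nsmul_eq_nsmul_iff_modEq,
    ← ZMod.natCast_eq_natCast_iff, ZMod.natCast_val, ← ZMod.castHom_apply (h := hdvd)]
  exact congrArg Units.val hu

theorem orbitRel_units_iff_zmultiples_eq [NeZero n] [Finite G] (a b : G) :
    MulAction.orbitRel (ZMod n)ˣ G a b ↔
      AddSubgroup.zmultiples a = AddSubgroup.zmultiples b := by
  refine ⟨?_, fun h => exists_units_smul_eq_of_zmultiples_eq h⟩
  rintro ⟨u, rfl⟩
  exact zmultiples_units_smul u b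

variable (n G) in
theorem sum_card_fixed_units_eq_totient_mul_card_isAddCyclic [NeZero n] [Finite G] :
    ∑ u : (ZMod n)ˣ, Nat.card {x : G // u • x = x} =
      n.totient * Nat.card {H : AddSubgroup G // IsAddCyclic H} := by
  classical
  have := Fintype.ofFinite G
  have := Fintype.ofFinite (MulAction.orbitRel.Quotient (ZMod n)ˣ G)
  let f : G → {H : AddSubgroup G // IsAddCyclic H} :=
    fun x => ⟨AddSubgroup.zmultiples x, inferInstance⟩
  have hf : f.Surjective := fun ⟨H, hH⟩ => by
    obtain ⟨g, rfl⟩ := (AddSubgroup.isAddCyclic_iff_exists_zmultiples_eq_top H).mp hH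
    exact ⟨g, rfl⟩
  let e : MulAction.orbitRel.Quotient (ZMod n)ˣ G ≃ {H : AddSubgroup G // IsAddCyclic H} :=
    (Quotient.congrRight (r' := Setoid.ker f) fun a b =>
      (orbitRel_units_iff_zmultiples_eq a b).trans
        (Subtype.ext_iff (a1 := f a) (a2 := f b)).symm).trans
      (Setoid.quotientKerEquivOfSurjective f hf)
  rw [← Nat.card_congr e, Nat.card_eq_fintype_card,
    ← ZMod.card_units_eq_totient, mul_comm,
    ← MulAction.sum_card_fixedBy_eq_card_orbits_mul_card_group]
  simp only [Nat.card_eq_fintype_card]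
  rfl

end ZModModule

theorem nsmul_mod_of_nsmul_eq_zero {M : Type*} [AddMonoid M] {q : ℕ} {x : M} (h : q • x = 0)
    (m : ℕ) : (m % q) • x = m • x := by
  conv_rhs => rw [← Nat.mod_add_div m q, add_nsmul, mul_nsmul, h, nsmul_zero, add_zero]

theorem card_nsmul_eq_self_pi {ι : Type*} [Fintype ι] {M : ι → Type*} [∀ i, AddMonoid (M i)]
    (m : ℕ) :
    Nat.card {x : ∀ i, M i // m • x = x} = ∏ i, Nat.card {y : M i // m • y = y} := by
  rw [← Nat.card_pi]
  exact Nat.card_congr ((Equiv.subtypeEquivRight (q := fun x : ∀ i, M i => ∀ i, m • x i = x i)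
    fun x => funext_iff).trans
    (Equiv.subtypePiEquivPi (p := fun i (y : M i) => m • y = y)))

theorem ZMod.card_nsmul_eq_self (N : ℕ) [NeZero N] {m : ℕ} (hm : 1 ≤ m) :
    Nat.card {x : ZMod N // m • x = x} = (m - 1).gcd N := by
  set f := AddMonoidHom.mulLeft ((m - 1 : ℕ) : ZMod N)
  have hfix : ∀ x : ZMod N, m • x = x ↔ x ∈ f.ker := fun x => by
    rw [AddMonoidHom.mem_ker, AddMonoidHom.coe_mulLeft, ← nsmul_eq_mul,
      ← add_eq_right (a := (m - 1) • x), ← succ_nsmul, Nat.sub_add_cancel hm]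
  have hrange : f.range = AddSubgroup.zmultiples ((m - 1 : ℕ) : ZMod N) := by
    ext y
    simp only [f, AddMonoidHom.mem_range, AddMonoidHom.coe_mulLeft,
      AddSubgroup.mem_zmultiples_iff, zsmul_eq_mul, mul_comm]
    refine ⟨fun ⟨x, hx⟩ => ?_, fun ⟨k, hk⟩ => ⟨k, hk⟩⟩
    obtain ⟨k, rfl⟩ := ZMod.intCast_surjective x
    exact ⟨k, hx⟩
  have hcard := f.ker.card_mul_index
  rw [AddSubgroup.index_ker, hrange, Nat.card_zmultiples, ZMod.addOrderOf_coe _ (NeZero.ne N),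
    Nat.card_zmod] at hcard
  rw [Nat.card_congr (Equiv.subtypeEquivRight hfix), Nat.gcd_comm]
  have hpos : 0 < N / N.gcd (m - 1) :=
    Nat.div_pos (Nat.gcd_le_left _ (NeZero.pos N)) (Nat.gcd_pos_of_pos_left _ (NeZero.pos N))
  refine Nat.eq_of_mul_eq_mul_right hpos ?_
  rw [hcard, Nat.mul_div_cancel' (Nat.gcd_dvd_left _ _)]

theorem ZMod.sum_units_val_eq_sum_filter_coprime {M : Type*} [AddCommMonoid M] {N : ℕ}
    [Fact (1 < N)] (f : ℕ → M) :
    ∑ u : (ZMod N)ˣ, f (u : ZMod N).val = ∑ m ∈ (Icc 1 N).filter (·.Coprime N), f m := by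
  have lt_of_mem : ∀ m ∈ (Icc 1 N).filter (·.Coprime N), m < N := fun m hm => by
    simp only [mem_filter, mem_Icc] at hm
    refine lt_of_le_of_ne hm.1.2 fun h => ?_
    rw [h, Nat.coprime_self] at hm
    exact (Fact.out : 1 < N).ne' hm.2
  refine sum_bij' (fun u _ => (u : ZMod N).val)
    (fun m hm => ZMod.unitOfCoprime m (mem_filter.mp hm).2) (fun u _ => ?_)
    (fun _ _ => mem_univ _)
    (fun u _ => Units.ext (by simp)) (fun m hm => ?_) (fun _ _ => rfl)
  · simp only [mem_filter, mem_Icc]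
    exact ⟨⟨Nat.pos_of_ne_zero ((ZMod.val_ne_zero _).mpr u.ne_zero), (ZMod.val_lt _).le⟩,
      ZMod.val_coe_unit_coprime u⟩
  · simp [Nat.mod_eq_of_lt (lt_of_mem m hm)]

theorem ZMod.sum_prod_units_eq_sum_units_prod {R : Type*} [CommSemiring R] {ι : Type*}
    [Fintype ι] [DecidableEq ι] (q : ι → ℕ) (hq : Pairwise (Nat.Coprime on q))
    [NeZero (∏ i, q i)] [∀ i, NeZero (q i)]
    (f : ι → ℕ → R) (hf : ∀ i m, f i (m % q i) = f i m) :
    ∑ w : ∀ i, (ZMod (q i))ˣ, ∏ i, f i (w i : ZMod (q i)).val =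
      ∑ u : (ZMod (∏ i, q i))ˣ, ∏ i, f i (u : ZMod (∏ i, q i)).val := by
  let crt := (Units.mapEquiv (ZMod.prodEquivPi q hq).toMulEquiv).trans MulEquiv.piUnits
  rw [← crt.toEquiv.sum_comp]
  refine sum_congr rfl fun u _ => prod_congr rfl fun i _ => ?_
  have : ((crt u i : ZMod (q i))).val = (u : ZMod (∏ i, q i)).val % q i := by
    change (ZMod.prodEquivPi q hq (u : ZMod (∏ i, q i)) i).val = _
    rw [ZMod.prodEquivPi_apply, ZMod.castHom_apply, ZMod.cast_eq_val, ZMod.val_natCast]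
  rw [← hf i (u : ZMod (∏ i, q i)).val, ← this]
  rfl

theorem sum_filter_not_dvd_prod_gcd_eq_sum_units {p : ℕ} [hp : Fact p.Prime] {a : ℕ}
    (ha : a ≠ 0) {ι : Type*} [Fintype ι] (d : ι → ℕ) [∀ j, NeZero (d j)] :
    ∑ m ∈ (Icc 1 (p ^ a)).filter (fun m => ¬ p ∣ m), ∏ j, (m - 1).gcd (d j) =
      ∑ v : (ZMod (p ^ a))ˣ,
        Nat.card {x : ∀ j, ZMod (d j) // (v : ZMod (p ^ a)).val • x = x} := by
  have : Fact (1 < p ^ a) := ⟨Nat.one_lt_pow ha hp.out.one_lt⟩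
  have hfilter : (Icc 1 (p ^ a)).filter (fun m => ¬ p ∣ m) =
      (Icc 1 (p ^ a)).filter (·.Coprime (p ^ a)) := filter_congr fun m _ => by
    rw [Nat.coprime_pow_right_iff (Nat.pos_of_ne_zero ha), Nat.coprime_comm,
      hp.out.coprime_iff_not_dvd]
  rw [ZMod.sum_units_val_eq_sum_filter_coprime
    fun m => Nat.card {x : ∀ j, ZMod (d j) // m • x = x}, hfilter]
  refine sum_congr rfl fun m hm => ?_
  rw [card_nsmul_eq_self_pi]
  exact prod_congr rfl fun j _ =>
    (ZMod.card_nsmul_eq_self _ (mem_Icc.mp (mem_filter.mp hm).1).1).symm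

theorem AddMonoid.exponent_pi_zmod_pow_of_monotone {r : ℕ} (p : ℕ) {α : Fin r → ℕ}
    (hα : Monotone α) (hr : r - 1 < r) :
    AddMonoid.exponent (∀ j : Fin r, ZMod (p ^ α j)) = p ^ α ⟨r - 1, hr⟩ := by
  rw [AddMonoid.exponent_pi]
  simp only [ZMod.exponent]
  exact dvd_antisymm
    (lcm_dvd fun j _ => pow_dvd_pow p (hα (Fin.le_def.mpr (Nat.le_sub_one_of_lt j.2))))
    (dvd_lcm (mem_univ _))

/-- Theorem 1 of the paper: for a finite abelian group in primary decomposition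
`G = ∏ i, ∏ j, ZMod (p i ^ α i j)` (with `p i` distinct primes, `1 ≤ α i 0 ≤ ⋯`),
the product over `i` of the sums `∑_{1 ≤ mᵢ ≤ pᵢ^{α_{i rᵢ}}, pᵢ ∤ mᵢ} ∏ⱼ gcd(mᵢ-1, pᵢ^{αᵢⱼ})`
equals `φ(exp G) * |L₁(G)|`, where `L₁(G)` is the set of cyclic subgroups of `G`. -/
theorem stmt0 (k : ℕ) (p : Fin k → ℕ) (hp : ∀ i, (p i).Prime)
    (hinj : Function.Injective p)
    (r : Fin k → ℕ) (hr : ∀ i, 1 ≤ r i)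
    (α : (i : Fin k) → Fin (r i) → ℕ)
    (hα1 : ∀ i j, 1 ≤ α i j)
    (hmono : ∀ i, Monotone (α i)) :
    (∏ i : Fin k,
      ∑ m ∈ (Finset.Icc 1 (p i ^ α i ⟨r i - 1, by have := hr i; omega⟩)).filter
          (fun m => ¬ p i ∣ m),
        ∏ j : Fin (r i), Nat.gcd (m - 1) (p i ^ α i j))
    = Nat.totient (AddMonoid.exponent (∀ i : Fin k, ∀ j : Fin (r i), ZMod (p i ^ α i j))) *
        Nat.card {H : AddSubgroup (∀ i : Fin k, ∀ j : Fin (r i), ZMod (p i ^ α i j)) //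
          IsAddCyclic H} := by
  set q : Fin k → ℕ := fun i => p i ^ α i ⟨r i - 1, by have := hr i; omega⟩
  have hq : Pairwise (Nat.Coprime on q) := fun i j hij =>
    Nat.Coprime.pow _ _ ((Nat.coprime_primes (hp i) (hp j)).mpr (hinj.ne hij))
  have (i : Fin k) (j : Fin (r i)) : NeZero (p i ^ α i j) := ⟨pow_ne_zero _ (hp i).ne_zero⟩
  have : NeZero (∏ i, q i) := ⟨prod_ne_zero_iff.mpr fun i _ => NeZero.ne _⟩
  have hexp_q (i : Fin k) : AddMonoid.exponent (∀ j, ZMod (p i ^ α i j)) = q i :=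
    AddMonoid.exponent_pi_zmod_pow_of_monotone _ (hmono i) _
  have hexp : AddMonoid.exponent (∀ i : Fin k, ∀ j : Fin (r i), ZMod (p i ^ α i j)) =
      ∏ i, q i := by
    rw [AddMonoid.exponent_pi]
    simp only [hexp_q]
    exact lcm_eq_prod (hq.set_pairwise _)
  let : Module (ZMod (∏ i, q i)) (∀ i : Fin k, ∀ j : Fin (r i), ZMod (p i ^ α i j)) :=
    AddCommGroup.zmodModule fun x => hexp ▸ AddMonoid.exponent_nsmul_eq_zero x
  rw [hexp, ← sum_card_fixed_units_eq_totient_mul_card_isAddCyclic,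
    prod_congr rfl fun i _ => sum_filter_not_dvd_prod_gcd_eq_sum_units (hp := ⟨hp i⟩)
      (Nat.one_le_iff_ne_zero.mp (hα1 i _)) (fun j => p i ^ α i j),
    Fintype.prod_sum, ZMod.sum_prod_units_eq_sum_units_prod q hq
      fun i m => Nat.card {x : ∀ j, ZMod (p i ^ α i j) // m • x = x}]
  · refine sum_congr rfl fun u _ => ?_
    simp only [Units.smul_def, ZMod.smul_eq_val_nsmul]
    rw [card_nsmul_eq_self_pi]
  · intro i m
    simp only [nsmul_mod_of_nsmul_eq_zero (hexp_q i ▸ AddMonoid.exponent_nsmul_eq_zero _)]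
end

section
/- Let $m$ and $n$ be positive integers, $l = \operatorname{lcm}(m,n)$, and let $p_1,\dots,p_k$ be the distinct primes dividing $l$. Write $m = p_1^{\alpha_1}\cdots p_k^{\alpha_k}$ and $n = p_1^{\beta_1}\cdots p_k^{\beta_k}$, where the exponents $\alpha_i, \beta_i \ge 0$ may be zero. Then the number of cyclic subgroups of $\mathbb{Z}/m\mathbb{Z} \times \mathbb{Z}/n\mathbb{Z}$ equals $$\frac{1}{\varphi(l)} \prod_{i=1}^k \ \sum_{\substack{1 \le m_i \le p_i^{\max\{\alpha_i,\beta_i\}} \\ p_i \nmid m_i}} \gcd(m_i - 1, p_i^{\alpha_i}) \gcd(m_i - 1, p_i^{\beta_i}).$$ -/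
/-!
The units of `ZMod L`, for `L = lcm(m, n)`, act on `G = ZMod m × ZMod n`, and the orbits are
exactly the generator sets of the cyclic subgroups: if `⟨g⟩ = ⟨g'⟩` then `g = c • g'` with `c`
invertible modulo the order of `g'`, and `c` lifts to a unit modulo `L`. Burnside's lemma then gives
`φ(L) · #{cyclic subgroups} = ∑_u #Fix(u)`, and `u` fixes `x` iff `(u - 1) • x = 0`, which has
`gcd(u - 1, m) · gcd(u - 1, n)` solutions. By the Chinese remainder theorem the sum over the units
of `ZMod L` splits into a product of sums over the units of `ZMod (pᵢ ^ max(αᵢ, βᵢ))`.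
-/

open Finset Function MulAction AddSubgroup

namespace Nat

lemma gcd_mod_of_dvd (a : ℕ) {d q : ℕ} (h : q ∣ d) : gcd (a % d) q = gcd a q := by
  rw [gcd_comm, gcd_rec q, mod_mod_of_dvd a h, ← gcd_rec, gcd_comm]

lemma gcd_prod_of_pairwise_coprime {ι : Type*} {s : Finset ι} {f : ι → ℕ} (c : ℕ)
    (h : (s : Set ι).Pairwise (Coprime on f)) :
    gcd c (∏ i ∈ s, f i) = ∏ i ∈ s, gcd c (f i) := by
  induction s using Finset.cons_induction with
  | empty => simp
  | cons a s ha ih =>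
    rw [coe_cons, Set.pairwise_insert_of_symm] at h
    rw [prod_cons, prod_cons, Coprime.gcd_mul c (Coprime.prod_right fun j hj =>
      h.2 j hj (ne_of_mem_of_not_mem hj ha).symm), ih h.1]

variable {ι : Type*} {p : ι → ℕ}

lemma pairwise_coprime_pow (hp : ∀ i, (p i).Prime) (hinj : Injective p) (e : ι → ℕ) :
    Pairwise (Coprime on fun i => p i ^ e i) :=
  fun i j hij => Coprime.pow _ _ ((coprime_primes (hp i) (hp j)).2 (hinj.ne hij))

lemma lcm_prod_pow [Fintype ι] (hp : ∀ i, (p i).Prime) (hinj : Injective p) (α β : ι → ℕ) :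
    lcm (∏ i, p i ^ α i) (∏ i, p i ^ β i) = ∏ i, p i ^ max (α i) (β i) := by
  apply dvd_antisymm
  · exact lcm_dvd (prod_dvd_prod_of_dvd _ _ fun i _ => pow_dvd_pow _ (le_max_left _ _))
      (prod_dvd_prod_of_dvd _ _ fun i _ => pow_dvd_pow _ (le_max_right _ _))
  · refine prod_dvd_of_isRelPrime (fun i _ j _ hij => coprime_iff_isRelPrime.1
      (pairwise_coprime_pow hp hinj (fun i => max (α i) (β i)) hij)) fun i _ => ?_
    rcases max_choice (α i) (β i) with h | h <;> rw [h]
    · exact (dvd_prod_of_mem _ (mem_univ i)).trans (dvd_lcm_left _ _)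
    · exact (dvd_prod_of_mem _ (mem_univ i)).trans (dvd_lcm_right _ _)

end Nat

lemma filter_Icc_coprime_prime_pow {p : ℕ} (hp : p.Prime) (e : ℕ) :
    {x ∈ Icc 1 (p ^ e) | x.Coprime (p ^ e)} = {x ∈ Icc 1 (p ^ e) | ¬ p ∣ x} := by
  refine filter_congr fun x hx => ?_
  rcases Nat.eq_zero_or_pos e with rfl | he
  · simp_all [hp.ne_one]
  · rw [Nat.coprime_pow_right_iff he, Nat.coprime_comm, hp.coprime_iff_not_dvd]

instance Nat.neZero_prod {ι : Type*} [Fintype ι] (N : ι → ℕ) [∀ i, NeZero (N i)] :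
    NeZero (∏ i, N i) :=
  ⟨prod_ne_zero_iff.2 fun i _ => NeZero.ne (N i)⟩

theorem ZMod.sum_units_prod_castHom {ι R : Type*} [Fintype ι] [DecidableEq ι] [CommSemiring R]
    (N : ι → ℕ) [∀ i, NeZero (N i)] (hN : Pairwise (Nat.Coprime on N))
    (f : ∀ i, ZMod (N i) → R) :
    ∑ u : (ZMod (∏ i, N i))ˣ, ∏ i, f i (ZMod.castHom (dvd_prod_of_mem N (mem_univ i)) _ u)
      = ∏ i, ∑ w : (ZMod (N i))ˣ, f i w := by
  rw [Fintype.prod_sum]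
  exact Fintype.sum_equiv
    ((Units.mapEquiv (ZMod.prodEquivPi N hN).toMulEquiv).trans MulEquiv.piUnits).toEquiv _ _
    fun u => by simp [MulEquiv.piUnits]

lemma ZMod.val_natCast_sub_one {N x : ℕ} (h1 : 1 ≤ x) (hx : x ≤ N) :
    ((x : ZMod N) - 1).val = x - 1 := by
  rw [← Nat.cast_one, ← Nat.cast_sub h1, ZMod.val_natCast, Nat.mod_eq_of_lt (by omega)]

lemma ZMod.sum_units_eq_sum_Icc_coprime {R : Type*} [AddCommMonoid R] (N : ℕ) [NeZero N]
    (f : ZMod N → R) :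
    ∑ w : (ZMod N)ˣ, f w = ∑ x ∈ Icc 1 N with x.Coprime N, f x := by
  symm
  refine sum_bij (fun x hx => ZMod.unitOfCoprime x (mem_filter.1 hx).2) (fun _ _ => mem_univ _)
    (fun x hx y hy hxy => ?_) (fun w _ => ?_) (fun _ _ => rfl)
  · have hx' := mem_Icc.1 (mem_filter.1 hx).1
    have hy' := mem_Icc.1 (mem_filter.1 hy).1
    have := congrArg (fun a : (ZMod N)ˣ => ((a : ZMod N) - 1).val) hxy
    simp only [ZMod.coe_unitOfCoprime, ZMod.val_natCast_sub_one hx'.1 hx'.2,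
      ZMod.val_natCast_sub_one hy'.1 hy'.2] at this
    omega
  · -- Not `w.val`, which is `0 ∉ Icc 1 N` when `N = 1`.
    have hw : ((((w : ZMod N) - 1).val + 1 : ℕ) : ZMod N) = w := by
      rw [Nat.cast_succ, ZMod.natCast_zmod_val, sub_add_cancel]
    refine ⟨((w : ZMod N) - 1).val + 1, mem_filter.2 ⟨mem_Icc.2 ⟨by omega, ZMod.val_lt _⟩,
      (ZMod.isUnit_iff_coprime _ N).1 (by rw [hw]; exact w.isUnit)⟩, Units.ext ?_⟩
    rw [ZMod.coe_unitOfCoprime, hw]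

lemma ZMod.gcd_val_prod {ι : Type*} [Fintype ι] (N : ι → ℕ) [∀ i, NeZero (N i)]
    (hN : Pairwise (Nat.Coprime on N)) {q : ι → ℕ} (hq : ∀ i, q i ∣ N i) (a : ZMod (∏ i, N i)) :
    a.val.gcd (∏ i, q i)
      = ∏ i, (ZMod.castHom (dvd_prod_of_mem N (mem_univ i)) (ZMod (N i)) a).val.gcd (q i) := by
  rw [Nat.gcd_prod_of_pairwise_coprime _ fun i _ j _ hij =>
    ((hN hij).coprime_dvd_left (hq i)).coprime_dvd_right (hq j)]
  refine prod_congr rfl fun i _ => ?_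
  rw [ZMod.castHom_apply, ZMod.cast_eq_val, ZMod.val_natCast, Nat.gcd_mod_of_dvd _ (hq i)]

lemma ZMod.nsmul_eq_zero_of_dvd {m L : ℕ} (h : m ∣ L) (x : ZMod m) : L • x = 0 := by
  rw [nsmul_eq_mul, (ZMod.natCast_eq_zero_iff L m).2 h, zero_mul]

section UnitsAction

variable {G : Type*} [AddCommGroup G] {L : ℕ} [NeZero L] [Module (ZMod L) G]

lemma ZMod.smul_eq_val_nsmul_s1 (a : ZMod L) (x : G) : a • x = a.val • x := by
  conv_lhs => rw [← ZMod.natCast_zmod_val a]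
  exact Nat.cast_smul_eq_nsmul _ _ _

lemma ZMod.smul_mem_zmultiples (a : ZMod L) (g : G) : a • g ∈ zmultiples g := by
  rw [ZMod.smul_eq_val_nsmul_s1]
  exact nsmul_mem (mem_zmultiples g) _

lemma zmultiples_units_smul_s1 (u : (ZMod L)ˣ) (g : G) : zmultiples (u • g) = zmultiples g := by
  refine le_antisymm (zmultiples_le.2 (ZMod.smul_mem_zmultiples _ g)) (zmultiples_le.2 ?_)
  have := ZMod.smul_mem_zmultiples ((u⁻¹ : (ZMod L)ˣ) : ZMod L) (u • g)
  rwa [← Units.smul_def, inv_smul_smul] at this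

lemma exists_units_smul_eq_of_zmultiples_eq_s1 {g g' : G} (h : zmultiples g = zmultiples g') :
    ∃ u : (ZMod L)ˣ, u • g' = g := by
  obtain ⟨c, rfl⟩ : ∃ c : ℤ, c • g' = g := mem_zmultiples_iff.1 (h ▸ mem_zmultiples g)
  obtain ⟨d, hd⟩ : ∃ d : ℤ, d • c • g' = g' := mem_zmultiples_iff.1 (h.symm ▸ mem_zmultiples g')
  have hL : addOrderOf g' ∣ L := addOrderOf_dvd_of_nsmul_eq_zero <| by
    rw [← Nat.cast_smul_eq_nsmul (ZMod L), ZMod.natCast_self, zero_smul]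
  have : NeZero (addOrderOf g') := ⟨fun h0 => NeZero.ne L (Nat.eq_zero_of_zero_dvd (h0 ▸ hL))⟩
  have hdc : ((d * c : ℤ) : ZMod (addOrderOf g')) = ((1 : ℤ) : ZMod (addOrderOf g')) := by
    rw [ZMod.intCast_eq_intCast_iff, ← zsmul_eq_zsmul_iff_modEq, mul_smul, hd, one_smul]
  push_cast at hdc
  obtain ⟨u, hu⟩ := ZMod.unitsMap_surjective hL (IsUnit.of_mul_eq_one_right _ hdc).unit
  refine ⟨u, ?_⟩
  have hu' := congrArg Units.val hu
  rw [ZMod.unitsMap_val, ZMod.cast_eq_val, IsUnit.unit_spec, ← Int.cast_natCast,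
    ZMod.intCast_eq_intCast_iff, ← zsmul_eq_zsmul_iff_modEq, natCast_zsmul] at hu'
  rw [Units.smul_def, ZMod.smul_eq_val_nsmul_s1, hu']

lemma orbitRel_units_iff_zmultiples_eq_s1 (g g' : G) :
    orbitRel (ZMod L)ˣ G g g' ↔ zmultiples g = zmultiples g' := by
  rw [orbitRel_apply, mem_orbit_iff]
  constructor
  · rintro ⟨u, rfl⟩
    exact zmultiples_units_smul_s1 u g'
  · exact exists_units_smul_eq_of_zmultiples_eq_s1

lemma card_orbitRel_units_eq_card_isAddCyclic :
    Nat.card (orbitRel.Quotient (ZMod L)ˣ G) = Nat.card {H : AddSubgroup G // IsAddCyclic H} := by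
  let f : G → {H : AddSubgroup G // IsAddCyclic H} := fun g => ⟨zmultiples g, inferInstance⟩
  have hf : Surjective f := fun ⟨H, hH⟩ => by
    obtain ⟨g, rfl⟩ := (AddSubgroup.isAddCyclic_iff_exists_zmultiples_eq_top H).1 hH
    exact ⟨g, rfl⟩
  refine Nat.card_congr ((Quotient.congrRight fun g g' => ?_).trans
    (Setoid.quotientKerEquivOfSurjective f hf))
  rw [orbitRel_units_iff_zmultiples_eq_s1, Setoid.ker_def, Subtype.ext_iff]

lemma mem_fixedBy_units_iff (u : (ZMod L)ˣ) (x : G) :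
    x ∈ fixedBy G u ↔ x ∈ (nsmulAddMonoidHom ((u : ZMod L) - 1).val : G →+ G).ker := by
  rw [mem_fixedBy, AddMonoidHom.mem_ker, nsmulAddMonoidHom_apply,
    ← ZMod.smul_eq_val_nsmul_s1 ((u : ZMod L) - 1), sub_smul, one_smul, sub_eq_zero, Units.smul_def]

lemma totient_mul_card_isAddCyclic [Finite G] :
    L.totient * Nat.card {H : AddSubgroup G // IsAddCyclic H}
      = ∑ u : (ZMod L)ˣ, Nat.card (nsmulAddMonoidHom ((u : ZMod L) - 1).val : G →+ G).ker := by
  classical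
  have := Fintype.ofFinite G
  rw [← card_orbitRel_units_eq_card_isAddCyclic (L := L), Nat.card_eq_fintype_card,
    ← ZMod.card_units_eq_totient, mul_comm, ← sum_card_fixedBy_eq_card_orbits_mul_card_group]
  refine sum_congr rfl fun u _ => ?_
  rw [← Nat.card_eq_fintype_card]
  exact Nat.card_congr (Equiv.subtypeEquivRight (mem_fixedBy_units_iff u))

end UnitsAction

lemma card_ker_nsmul_prod {A B : Type*} [AddCommGroup A] [AddCommGroup B] (c : ℕ) :
    Nat.card (nsmulAddMonoidHom c : A × B →+ A × B).ker
      = Nat.card (nsmulAddMonoidHom c : A →+ A).ker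
        * Nat.card (nsmulAddMonoidHom c : B →+ B).ker := by
  rw [← Nat.card_prod]
  refine Nat.card_congr ((Equiv.subtypeEquivRight fun x => ?_).trans
    (Equiv.subtypeProdEquivProd (p := (· ∈ (nsmulAddMonoidHom c : A →+ A).ker))
      (q := (· ∈ (nsmulAddMonoidHom c : B →+ B).ker))))
  simp only [AddMonoidHom.mem_ker, nsmulAddMonoidHom_apply, Prod.ext_iff, Prod.smul_fst,
    Prod.smul_snd, Prod.fst_zero, Prod.snd_zero]

lemma card_ker_nsmul_zmod (m c : ℕ) [NeZero m] :
    Nat.card (nsmulAddMonoidHom c : ZMod m →+ ZMod m).ker = c.gcd m := by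
  rw [IsAddCyclic.card_nsmulAddMonoidHom_ker, Nat.card_zmod, Nat.gcd_comm]

theorem totient_mul_card_isAddCyclic_zmod_prod {m n L : ℕ} [NeZero L] (hm : m ∣ L) (hn : n ∣ L) :
    L.totient * Nat.card {H : AddSubgroup (ZMod m × ZMod n) // IsAddCyclic H}
      = ∑ u : (ZMod L)ˣ, ((u : ZMod L) - 1).val.gcd m * ((u : ZMod L) - 1).val.gcd n := by
  have : NeZero m := ⟨fun h => NeZero.ne L (Nat.eq_zero_of_zero_dvd (h ▸ hm))⟩
  have : NeZero n := ⟨fun h => NeZero.ne L (Nat.eq_zero_of_zero_dvd (h ▸ hn))⟩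
  let : Module (ZMod L) (ZMod m × ZMod n) := AddCommGroup.zmodModule fun x =>
    Prod.ext (ZMod.nsmul_eq_zero_of_dvd hm x.1) (ZMod.nsmul_eq_zero_of_dvd hn x.2)
  rw [totient_mul_card_isAddCyclic]
  simp only [card_ker_nsmul_prod, card_ker_nsmul_zmod]

theorem stmt1_general (m n : ℕ) (k : ℕ)
    (p : Fin k → ℕ) (hp : ∀ i, (p i).Prime) (hinj : Function.Injective p)
    (α β : Fin k → ℕ)
    (hmfac : m = ∏ i, p i ^ α i) (hnfac : n = ∏ i, p i ^ β i) :
    Nat.totient (Nat.lcm m n) *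
        Nat.card {H : AddSubgroup (ZMod m × ZMod n) // IsAddCyclic H}
      = ∏ i, ∑ x ∈ (Finset.Icc 1 (p i ^ max (α i) (β i))).filter (fun x => ¬ p i ∣ x),
          Nat.gcd (x - 1) (p i ^ α i) * Nat.gcd (x - 1) (p i ^ β i) := by
  set N : Fin k → ℕ := fun i => p i ^ max (α i) (β i)
  have : ∀ i, NeZero (N i) := fun i => ⟨pow_ne_zero _ (hp i).ne_zero⟩
  have hN : Pairwise (Nat.Coprime on N) := Nat.pairwise_coprime_pow hp hinj _
  have hlcm : m.lcm n = ∏ i, N i := hmfac ▸ hnfac ▸ Nat.lcm_prod_pow hp hinj α β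
  let F (i : Fin k) (w : ZMod (N i)) : ℕ :=
    (w - 1).val.gcd (p i ^ α i) * (w - 1).val.gcd (p i ^ β i)
  calc _ = ∑ u : (ZMod (∏ i, N i))ˣ, ((u : ZMod (∏ i, N i)) - 1).val.gcd m
          * ((u : ZMod (∏ i, N i)) - 1).val.gcd n := by
        rw [hlcm]
        exact totient_mul_card_isAddCyclic_zmod_prod (hlcm ▸ m.dvd_lcm_left n)
          (hlcm ▸ m.dvd_lcm_right n)
    _ = ∑ u : (ZMod (∏ i, N i))ˣ,
          ∏ i, F i (ZMod.castHom (dvd_prod_of_mem N (mem_univ i)) _ u) := by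
        refine sum_congr rfl fun u _ => ?_
        rw [hmfac, hnfac, ZMod.gcd_val_prod N hN fun i => pow_dvd_pow _ (le_max_left _ _),
          ZMod.gcd_val_prod N hN fun i => pow_dvd_pow _ (le_max_right _ _), ← prod_mul_distrib]
        simp only [F, map_sub, map_one]
    _ = ∏ i, ∑ w : (ZMod (N i))ˣ, F i w := ZMod.sum_units_prod_castHom N hN F
    _ = _ := by
        refine prod_congr rfl fun i _ => ?_
        rw [ZMod.sum_units_eq_sum_Icc_coprime, filter_Icc_coprime_prime_pow (hp i)]
        refine sum_congr rfl fun x hx => ?_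
        obtain ⟨hx1, hxN⟩ := mem_Icc.1 (mem_filter.1 hx).1
        simp only [F, ZMod.val_natCast_sub_one hx1 hxN]

/-- Corollary 2: for positive integers `m, n` with `l = lcm(m,n)`, `p 0, …, p (k-1)` the
distinct primes dividing `l`, and `m = ∏ pᵢ^{αᵢ}`, `n = ∏ pᵢ^{βᵢ}`, the number of cyclic
subgroups of `ZMod m × ZMod n` equals
`(1/φ(l)) ∏ᵢ ∑_{1 ≤ mᵢ ≤ pᵢ^{max(αᵢ,βᵢ)}, pᵢ ∤ mᵢ} gcd(mᵢ-1,pᵢ^{αᵢ}) gcd(mᵢ-1,pᵢ^{βᵢ})`,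
stated multiplicatively to avoid division. -/
theorem stmt1 (m n : ℕ) (hm : 0 < m) (hn : 0 < n) (k : ℕ)
    (p : Fin k → ℕ) (hp : ∀ i, (p i).Prime) (hinj : Function.Injective p)
    (hprimes : ∀ q : ℕ, q.Prime → (q ∣ Nat.lcm m n ↔ ∃ i, p i = q))
    (α β : Fin k → ℕ)
    (hmfac : m = ∏ i, p i ^ α i) (hnfac : n = ∏ i, p i ^ β i) :
    Nat.totient (Nat.lcm m n) *
        Nat.card {H : AddSubgroup (ZMod m × ZMod n) // IsAddCyclic H}
      = ∏ i, ∑ x ∈ (Finset.Icc 1 (p i ^ max (α i) (β i))).filter (fun x => ¬ p i ∣ x),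
          Nat.gcd (x - 1) (p i ^ α i) * Nat.gcd (x - 1) (p i ^ β i) :=
  stmt1_general m n k p hp hinj α β hmfac hnfac
end

section
/- Let $n$ be a positive integer with prime factorization $n = p_1^{\alpha_1}\cdots p_k^{\alpha_k}$ (the $p_i$ distinct primes, $\alpha_i \ge 1$). Then for every positive integer $r$, the number of cyclic subgroups of $(\mathbb{Z}/n\mathbb{Z})^r$ equals $$\frac{1}{\varphi(n)} \prod_{i=1}^k \ \sum_{\substack{1 \le m_i \le p_i^{\alpha_i} \\ p_i \nmid m_i}} \gcd(m_i - 1, p_i^{\alpha_i})^r.$$ -/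
/-!
Burnside's lemma for the action of `(ZMod n)ˣ` on `(ZMod n)ʳ` by scaling: two elements generate
the same cyclic subgroup iff they differ by a unit (a unit modulo the order of an element lifts to
a unit modulo `n`), so the orbits are the cyclic subgroups. A unit `u` fixes exactly the vectors
whose coordinates lie in the kernel of multiplication by `u - 1`, which has `gcd(u - 1, n)`
elements. Finally the Chinese remainder theorem splits the sum over `(ZMod n)ˣ` into a product
over the prime powers dividing `n`.
-/

open Finset Function MulAction

theorem MulAction.sum_natCard_fixedBy_eq_natCard_orbits_mul_natCard (G X : Type*) [Group G]
    [MulAction G X] [Fintype G] [Finite X] :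
    ∑ g : G, Nat.card (fixedBy X g) = Nat.card (Quotient (orbitRel G X)) * Nat.card G := by
  rw [← Nat.card_prod, ← Nat.card_congr (sigmaFixedByEquivOrbitsProdGroup G X), Nat.card_sigma]

theorem MulAction.natCard_fixedBy_pi {G α ι : Type*} [Monoid G] [MulAction G α] [Finite ι]
    (g : G) : Nat.card (fixedBy (ι → α) g) = Nat.card (fixedBy α g) ^ Nat.card ι := by
  rw [← Nat.card_fun]
  exact Nat.card_congr <| (Equiv.subtypeEquivRight fun f => by
    simp only [mem_fixedBy, funext_iff, Pi.smul_apply]).trans Equiv.subtypePiEquivPi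

theorem Nat.gcd_prod_of_pairwise_coprime_s2 {ι : Type*} (a : ℕ) (s : Finset ι) (q : ι → ℕ)
    (hq : (s : Set ι).Pairwise (Nat.Coprime on q)) :
    a.gcd (∏ i ∈ s, q i) = ∏ i ∈ s, a.gcd (q i) := by
  classical
  induction s using Finset.induction_on with
  | empty => simp
  | insert j s hj ih =>
    rw [Finset.coe_insert, Set.pairwise_insert_of_notMem (by simpa using hj)] at hq
    rw [prod_insert hj, prod_insert hj, Nat.Coprime.gcd_mul a, ih hq.1]
    exact Nat.Coprime.prod_right fun i hi => (hq.2 i hi).1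

theorem ZMod.natCard_mul_eq_zero {n : ℕ} [NeZero n] (a : ZMod n) :
    Nat.card {x : ZMod n // a * x = 0} = a.val.gcd n := by
  let f := AddMonoidHom.mulLeft a
  have hrange : f.range = AddSubgroup.zmultiples a := by
    ext y
    constructor
    · rintro ⟨x, rfl⟩
      rw [← ZMod.natCast_zmod_val x]
      exact ⟨x.val, by simp [f, mul_comm]⟩
    · rintro ⟨k, rfl⟩
      exact ⟨k, by simp [f, mul_comm]⟩
  have hcard : Nat.card f.ker * (n / n.gcd a.val) = n := by
    rw [← ZMod.addOrderOf_coe _ (NeZero.ne n), ZMod.natCast_zmod_val, ← Nat.card_zmultiples,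
      ← hrange, ← AddSubgroup.index_ker, AddSubgroup.card_mul_index, Nat.card_zmod]
  have hpos : n / n.gcd a.val ≠ 0 :=
    (Nat.div_pos (Nat.gcd_le_left _ (NeZero.pos n))
      (Nat.gcd_pos_of_pos_left _ (NeZero.pos n))).ne'
  rw [Nat.gcd_comm, ← Nat.div_div_self (Nat.gcd_dvd_left n a.val) (NeZero.ne n)]
  exact Nat.eq_div_of_mul_eq_left hpos hcard

theorem ZMod.natCard_fixedBy_units {n : ℕ} [NeZero n] (u : (ZMod n)ˣ) :
    Nat.card (fixedBy (ZMod n) u) = ((u : ZMod n) - 1).val.gcd n := by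
  rw [← ZMod.natCard_mul_eq_zero]
  exact Nat.card_congr <| Equiv.subtypeEquivRight fun x => by
    rw [mem_fixedBy, Units.smul_def, smul_eq_mul, sub_mul, one_mul, sub_eq_zero]

theorem ZMod.val_sub_one_of_ne_zero {n : ℕ} [Fact (1 < n)] {a : ZMod n} (ha : a ≠ 0) :
    (a - 1).val = a.val - 1 := by
  rw [ZMod.val_sub, ZMod.val_one]
  rwa [ZMod.val_one, Nat.one_le_iff_ne_zero, ZMod.val_ne_zero]

theorem ZMod.sum_units_val_eq_sum_filter_coprime_s2 {n : ℕ} [NeZero n] {R : Type*}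
    [AddCommMonoid R] (f : ℕ → R) :
    ∑ u : (ZMod n)ˣ, f (u : ZMod n).val = ∑ x ∈ range n with n.Coprime x, f x := by
  have himage :
      univ.image (fun u : (ZMod n)ˣ => (u : ZMod n).val) = {x ∈ range n | n.Coprime x} := by
    ext x
    simp only [mem_image, mem_univ, true_and, mem_filter, mem_range]
    constructor
    · rintro ⟨u, rfl⟩
      exact ⟨ZMod.val_lt _, (ZMod.val_coe_unit_coprime u).symm⟩
    · rintro ⟨hx, hcop⟩
      exact ⟨ZMod.unitOfCoprime x hcop.symm, by simp [ZMod.val_cast_of_lt hx]⟩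
  rw [← himage, sum_image fun u _ v _ h => Units.ext (ZMod.val_injective n h)]

theorem Nat.filter_coprime_range_prime_pow {P β : ℕ} (hP : P.Prime) (hβ : 1 ≤ β) :
    {x ∈ range (P ^ β) | (P ^ β).Coprime x} = {x ∈ Icc 1 (P ^ β) | ¬ P ∣ x} := by
  ext x
  simp only [mem_filter, mem_range, mem_Icc, Nat.coprime_pow_left_iff hβ, hP.coprime_iff_not_dvd]
  constructor
  · rintro ⟨hx, hndvd⟩
    have hx0 : x ≠ 0 := by rintro rfl; exact hndvd (dvd_zero P)
    exact ⟨⟨Nat.one_le_iff_ne_zero.2 hx0, hx.le⟩, hndvd⟩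
  · rintro ⟨⟨-, hx⟩, hndvd⟩
    refine ⟨lt_of_le_of_ne hx ?_, hndvd⟩
    rintro rfl
    exact hndvd (dvd_pow_self P (by omega))

namespace ZModModule

variable {n : ℕ} {M : Type*} [AddCommGroup M] [Module (ZMod n) M]

variable (n) in
lemma addOrderOf_dvd (y : M) : addOrderOf y ∣ n :=
  addOrderOf_dvd_of_nsmul_eq_zero (ZModModule.char_nsmul_eq_zero n y)

lemma smul_eq_smul_iff [NeZero n] (y : M) (a b : ZMod n) :
    a • y = b • y ↔
      ZMod.castHom (addOrderOf_dvd n y) (ZMod (addOrderOf y)) a =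
        ZMod.castHom (addOrderOf_dvd n y) (ZMod (addOrderOf y)) b := by
  have hy : IsOfFinAddOrder y := isOfFinAddOrder_iff_nsmul_eq_zero.2
    ⟨n, NeZero.pos n, ZModModule.char_nsmul_eq_zero n y⟩
  rw [← ZMod.natCast_zmod_val a, ← ZMod.natCast_zmod_val b, Nat.cast_smul_eq_nsmul,
    Nat.cast_smul_eq_nsmul, hy.nsmul_eq_nsmul_iff_modEq, map_natCast, map_natCast,
    ZMod.natCast_eq_natCast_iff]

variable (n) in
lemma mem_zmultiples_iff {x y : M} :
    x ∈ AddSubgroup.zmultiples y ↔ ∃ a : ZMod n, a • y = x := by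
  refine ⟨fun ⟨k, hk⟩ => ⟨k, by rwa [Int.cast_smul_eq_zsmul]⟩, ?_⟩
  rintro ⟨a, rfl⟩
  exact zmod_smul_mem (AddSubgroup.mem_zmultiples y) a

theorem zmultiples_eq_zmultiples_iff [NeZero n] {x y : M} :
    AddSubgroup.zmultiples x = AddSubgroup.zmultiples y ↔ ∃ u : (ZMod n)ˣ, u • y = x := by
  constructor
  · intro h
    obtain ⟨a, ha⟩ := (mem_zmultiples_iff n).1 (h ▸ AddSubgroup.mem_zmultiples x)
    obtain ⟨b, hb⟩ := (mem_zmultiples_iff n).1 (h.symm ▸ AddSubgroup.mem_zmultiples y)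
    have hd := addOrderOf_dvd n y
    set φ := ZMod.castHom hd (ZMod (addOrderOf y))
    have hba : φ b * φ a = 1 := by
      rw [← map_mul, ← map_one φ, ← smul_eq_smul_iff, mul_smul, ha, hb, one_smul]
    obtain ⟨u, hu⟩ := ZMod.unitsMap_surjective hd (IsUnit.of_mul_eq_one_right _ hba).unit
    refine ⟨u, ?_⟩
    rw [Units.smul_def, ← ha, smul_eq_smul_iff]
    simpa [φ, ZMod.unitsMap_def] using congrArg Units.val hu
  · rintro ⟨u, rfl⟩
    refine le_antisymm (AddSubgroup.zmultiples_le.2 (zmod_smul_mem ?_ _))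
      (AddSubgroup.zmultiples_le.2 ?_)
    · exact AddSubgroup.mem_zmultiples y
    · have h := zmod_smul_mem (AddSubgroup.mem_zmultiples (u • y))
        ((u⁻¹ : (ZMod n)ˣ) : ZMod n)
      rwa [← Units.smul_def, inv_smul_smul] at h

variable (n M) in
noncomputable def orbitsUnitsEquivCyclicAddSubgroups [NeZero n] :
    Quotient (orbitRel (ZMod n)ˣ M) ≃ {H : AddSubgroup M // IsAddCyclic H} :=
  (Quotient.congrRight fun x y => by
      rw [Setoid.ker_def, zmultiples_eq_zmultiples_iff (n := n)]; rfl).trans <|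
    (Setoid.quotientKerEquivRange AddSubgroup.zmultiples).trans <|
      Equiv.subtypeEquivRight fun H => (H.isAddCyclic_iff_exists_zmultiples_eq_top).symm

theorem totient_mul_natCard_isAddCyclic [NeZero n] [Finite M] :
    n.totient * Nat.card {H : AddSubgroup M // IsAddCyclic H} =
      ∑ u : (ZMod n)ˣ, Nat.card (fixedBy M u) := by
  rw [sum_natCard_fixedBy_eq_natCard_orbits_mul_natCard,
    Nat.card_congr (orbitsUnitsEquivCyclicAddSubgroups n M),
    Nat.card_eq_fintype_card (α := (ZMod n)ˣ), ZMod.card_units_eq_totient, mul_comm]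

end ZModModule

theorem ZMod.totient_mul_natCard_isAddCyclic_pi {n : ℕ} [NeZero n] (r : ℕ) :
    n.totient * Nat.card {H : AddSubgroup (Fin r → ZMod n) // IsAddCyclic H} =
      ∑ u : (ZMod n)ˣ, ((u : ZMod n) - 1).val.gcd n ^ r := by
  rw [ZModModule.totient_mul_natCard_isAddCyclic]
  simp only [natCard_fixedBy_pi, ZMod.natCard_fixedBy_units, Nat.card_fin]

theorem ZMod.sum_units_gcd_val_sub_one_pow_prod {ι : Type*} [Fintype ι] (q : ι → ℕ)
    [∀ i, NeZero (q i)] [NeZero (∏ i, q i)] (hq : Pairwise (Nat.Coprime on q)) (r : ℕ) :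
    ∑ u : (ZMod (∏ i, q i))ˣ, ((u : ZMod (∏ i, q i)) - 1).val.gcd (∏ i, q i) ^ r =
      ∏ i, ∑ w : (ZMod (q i))ˣ, ((w : ZMod (q i)) - 1).val.gcd (q i) ^ r := by
  classical
  let Φ := (Units.mapEquiv (ZMod.prodEquivPi q hq).toMulEquiv).trans MulEquiv.piUnits
  have hΦ (u : (ZMod (∏ i, q i))ˣ) (i : ι) :
      ((Φ u i : ZMod (q i)) - 1).val.gcd (q i) = ((u : ZMod (∏ i, q i)) - 1).val.gcd (q i) := by
    have : (Φ u i : ZMod (q i)) - 1 = (((u : ZMod (∏ i, q i)) - 1).val : ZMod (q i)) := by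
      change ZMod.prodEquivPi q hq u i - 1 = _
      rw [ZMod.prodEquivPi_apply,
        ← map_one (ZMod.castHom (dvd_prod_of_mem q (mem_univ i)) (ZMod (q i))), ← map_sub,
        ZMod.castHom_apply, ZMod.cast_eq_val]
    rw [this, ZMod.val_natCast, ← Nat.gcd_rec, Nat.gcd_comm]
  calc ∑ u : (ZMod (∏ i, q i))ˣ, ((u : ZMod (∏ i, q i)) - 1).val.gcd (∏ i, q i) ^ r
      = ∑ u, ∏ i, ((Φ u i : ZMod (q i)) - 1).val.gcd (q i) ^ r := by
        simp only [hΦ, prod_pow, ← Nat.gcd_prod_of_pairwise_coprime_s2 _ _ _ (hq.set_pairwise _)]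
    _ = ∑ w : Π i, (ZMod (q i))ˣ, ∏ i, ((w i : ZMod (q i)) - 1).val.gcd (q i) ^ r :=
        Φ.sum_comp fun w => ∏ i, ((w i : ZMod (q i)) - 1).val.gcd (q i) ^ r
    _ = ∏ i, ∑ w : (ZMod (q i))ˣ, ((w : ZMod (q i)) - 1).val.gcd (q i) ^ r := by
        rw [Fintype.prod_sum]

theorem ZMod.sum_units_gcd_val_sub_one_pow_prime_pow {P β : ℕ} [NeZero (P ^ β)] (hP : P.Prime)
    (hβ : 1 ≤ β) (r : ℕ) :
    ∑ w : (ZMod (P ^ β))ˣ, ((w : ZMod (P ^ β)) - 1).val.gcd (P ^ β) ^ r =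
      ∑ x ∈ Icc 1 (P ^ β) with ¬ P ∣ x, (x - 1).gcd (P ^ β) ^ r := by
  have : Fact (1 < P ^ β) := ⟨Nat.one_lt_pow (by omega) hP.one_lt⟩
  have hval (w : (ZMod (P ^ β))ˣ) : ((w : ZMod (P ^ β)) - 1).val = (w : ZMod (P ^ β)).val - 1 :=
    ZMod.val_sub_one_of_ne_zero w.ne_zero
  simp only [hval]
  rw [ZMod.sum_units_val_eq_sum_filter_coprime_s2 (fun x => (x - 1).gcd (P ^ β) ^ r),
    Nat.filter_coprime_range_prime_pow hP hβ]

theorem stmt2_general (n : ℕ) (hn : 0 < n) (k : ℕ) (p : Fin k → ℕ) (hp : ∀ i, (p i).Prime)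
    (hinj : Function.Injective p) (α : Fin k → ℕ) (hα : ∀ i, 1 ≤ α i)
    (hfac : n = ∏ i, p i ^ α i) (r : ℕ) :
    Nat.totient n * Nat.card {H : AddSubgroup (Fin r → ZMod n) // IsAddCyclic H}
      = ∏ i, ∑ x ∈ (Finset.Icc 1 (p i ^ α i)).filter (fun x => ¬ p i ∣ x),
          Nat.gcd (x - 1) (p i ^ α i) ^ r := by
  subst hfac
  have (i : Fin k) : NeZero (p i ^ α i) := ⟨pow_ne_zero _ (hp i).ne_zero⟩
  have : NeZero (∏ i, p i ^ α i) := ⟨hn.ne'⟩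
  have hcop : Pairwise (Nat.Coprime on fun i => p i ^ α i) := fun i j hij =>
    Nat.Coprime.pow _ _ ((Nat.coprime_primes (hp i) (hp j)).2 (hinj.ne hij))
  rw [ZMod.totient_mul_natCard_isAddCyclic_pi, ZMod.sum_units_gcd_val_sub_one_pow_prod _ hcop]
  exact prod_congr rfl fun i _ => ZMod.sum_units_gcd_val_sub_one_pow_prime_pow (hp i) (hα i) r

/-- Corollary 3: for `n = ∏ pᵢ^{αᵢ}` and any `r ≥ 1`, the number of cyclic subgroups of
`(ZMod n)^r` equals `(1/φ(n)) ∏ᵢ ∑_{1 ≤ mᵢ ≤ pᵢ^{αᵢ}, pᵢ ∤ mᵢ} gcd(mᵢ-1, pᵢ^{αᵢ})^r`,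
stated multiplicatively to avoid division. -/
theorem stmt2 (n : ℕ) (hn : 0 < n) (k : ℕ) (p : Fin k → ℕ) (hp : ∀ i, (p i).Prime)
    (hinj : Function.Injective p) (α : Fin k → ℕ) (hα : ∀ i, 1 ≤ α i)
    (hfac : n = ∏ i, p i ^ α i) (r : ℕ) (hr : 0 < r) :
    Nat.totient n * Nat.card {H : AddSubgroup (Fin r → ZMod n) // IsAddCyclic H}
      = ∏ i, ∑ x ∈ (Finset.Icc 1 (p i ^ α i)).filter (fun x => ¬ p i ∣ x),
          Nat.gcd (x - 1) (p i ^ α i) ^ r :=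
  stmt2_general n hn k p hp hinj α hα hfac r
end

section
/- Let $n$ be a positive integer with prime factorization $n = p_1^{\alpha_1}\cdots p_k^{\alpha_k}$ (the $p_i$ distinct primes, $\alpha_i \ge 1$). Then $$\prod_{i=1}^k \ \sum_{\substack{1 \le m_i \le p_i^{\alpha_i} \\ p_i \nmid m_i}} \gcd(m_i - 1, p_i^{\alpha_i}) \,=\, \varphi(n)\,\tau(n),$$ where $\varphi$ is Euler's totient function and $\tau(n)$ is the number of positive divisors of $n$. -/
/-!
Writing `gcd(y, q) = ∑_{d ∣ gcd(y, q)} φ(d)` and swapping the sums, the local sum for `q = p^a`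
becomes `∑_{j ≤ a} φ(p^j) · #{y < q : p ∤ y + 1, p^j ∣ y}`. For `j = 0` the count is `φ(q)`; for
`j ≥ 1` the condition `p ∤ y + 1` is automatic and the count is `p^(a-j)`, so again every term
equals `φ(q)` and the local sum is `φ(q) τ(q)`. The product over the prime powers is then `φ(n) τ(n)`
because `φ · τ` is multiplicative.
-/

open Finset ArithmeticFunction
open scoped Nat Function

namespace Nat

theorem gcd_eq_sum_totient_filter_divisors (y : ℕ) {q : ℕ} (hq : q ≠ 0) :
    gcd y q = ∑ d ∈ q.divisors with d ∣ y, φ d := by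
  rw [← sum_totient (gcd y q)]
  congr 1
  ext d
  simp [dvd_gcd_iff, hq, and_comm]

theorem sum_gcd_eq_sum_totient_mul_card (s : Finset ℕ) {q : ℕ} (hq : q ≠ 0) :
    ∑ y ∈ s, gcd y q = ∑ d ∈ q.divisors, φ d * #{y ∈ s | d ∣ y} := by
  simp_rw [gcd_eq_sum_totient_filter_divisors _ hq, sum_filter]
  rw [sum_comm]
  refine sum_congr rfl fun d _ => ?_
  rw [← sum_filter, sum_const, smul_eq_mul, mul_comm]

theorem card_filter_dvd_range_of_dvd {d n : ℕ} (h : d ∣ n) : #{y ∈ range n | d ∣ y} = n / d := by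
  rcases d.eq_zero_or_pos with rfl | hd
  · simp [zero_dvd_iff.mp h]
  have := count_modEq_card n hd 0
  simpa [count_eq_card_filter_range, modEq_zero_iff_dvd, mod_eq_zero_of_dvd h] using this

theorem totient_prime_pow_eq_sub_div {p : ℕ} (hp : p.Prime) (a : ℕ) :
    φ (p ^ a) = p ^ a - p ^ a / p := by
  cases a with
  | zero => simp [div_eq_of_lt hp.one_lt]
  | succ a =>
    rw [totient_prime_pow_succ hp, pow_succ, mul_div_cancel_right₀ _ hp.ne_zero, mul_tsub, mul_one]

theorem totient_mul_card_filter_dvd_prime_pow {p : ℕ} (hp : p.Prime) {a j : ℕ} (hj : j ≤ a) :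
    φ (p ^ j) * #{y ∈ range (p ^ a) | ¬ p ∣ y + 1 ∧ p ^ j ∣ y} = φ (p ^ a) := by
  cases j with
  | zero =>
    have hsplit := card_filter_add_card_filter_not (s := range (p ^ a)) (p ∣ · + 1)
    rw [card_multiples, card_range] at hsplit
    simp only [pow_zero, totient_one, one_mul, one_dvd, and_true, totient_prime_pow_eq_sub_div hp]
    omega
  | succ i =>
    have hnot_dvd : ∀ y, p ^ (i + 1) ∣ y → ¬ p ∣ y + 1 := fun y hy hy1 =>
      hp.one_lt.ne' <| (Nat.dvd_add_right ((dvd_pow_self p i.succ_ne_zero).trans hy)).mp hy1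
        |> Nat.dvd_one.mp
    rw [filter_congr fun y _ => and_iff_right_of_imp (hnot_dvd y),
      card_filter_dvd_range_of_dvd (pow_dvd_pow p hj)]
    obtain ⟨m, rfl⟩ := exists_add_of_le hj
    rw [Nat.pow_div hj hp.pos, totient_prime_pow_succ hp, add_right_comm,
      totient_prime_pow_succ hp, show i + m + 1 - (i + 1) = m by omega, pow_add]
    ring

theorem sum_gcd_sub_one_prime_pow {p : ℕ} (hp : p.Prime) (a : ℕ) :
    ∑ x ∈ Icc 1 (p ^ a) with ¬ p ∣ x, gcd (x - 1) (p ^ a) = φ (p ^ a) * #(p ^ a).divisors := by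
  have hshift : ∑ x ∈ Icc 1 (p ^ a) with ¬ p ∣ x, gcd (x - 1) (p ^ a)
      = ∑ y ∈ range (p ^ a) with ¬ p ∣ y + 1, gcd y (p ^ a) := by
    have hIcc : Icc 1 (p ^ a) = (range (p ^ a)).map (addRightEmbedding 1) := by
      ext x
      simp only [mem_Icc, mem_map, mem_range, addRightEmbedding_apply]
      exact ⟨fun hx => ⟨x - 1, by omega, by omega⟩, by omega⟩
    rw [hIcc, filter_map, sum_map]
    simp
  rw [hshift, sum_gcd_eq_sum_totient_mul_card _ (pow_ne_zero a hp.ne_zero), divisors_prime_pow hp,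
    sum_map, card_map, card_range, mul_comm]
  refine (sum_const_nat fun j hj => ?_).trans (by rw [card_range])
  rw [filter_filter]
  exact totient_mul_card_filter_dvd_prime_pow hp (Nat.lt_succ_iff.mp (mem_range.mp hj))

end Nat

namespace ArithmeticFunction

def totientMulCardDivisors : ArithmeticFunction ℕ := ⟨fun n => φ n * #n.divisors, by simp⟩

@[simp]
theorem totientMulCardDivisors_apply (n : ℕ) : totientMulCardDivisors n = φ n * #n.divisors := rfl

theorem isMultiplicative_totientMulCardDivisors : totientMulCardDivisors.IsMultiplicative := by
  refine IsMultiplicative.iff_ne_zero.mpr ⟨by simp, fun _ _ h => ?_⟩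
  simp only [totientMulCardDivisors_apply, Nat.totient_mul h, Nat.Coprime.card_divisors_mul h]
  ring

end ArithmeticFunction

theorem stmt3_general (n : ℕ) (k : ℕ) (p : Fin k → ℕ) (hp : ∀ i, (p i).Prime)
    (hinj : Function.Injective p) (α : Fin k → ℕ)
    (hfac : n = ∏ i, p i ^ α i) :
    (∏ i, ∑ x ∈ (Finset.Icc 1 (p i ^ α i)).filter (fun x => ¬ p i ∣ x),
        Nat.gcd (x - 1) (p i ^ α i))
      = Nat.totient n * n.divisors.card := by
  have hcoprime : ((univ : Finset (Fin k)) : Set (Fin k)).Pairwise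
      (Nat.Coprime on fun i => p i ^ α i) := fun i _ j _ hij =>
    Nat.Coprime.pow _ _ ((Nat.coprime_primes (hp i) (hp j)).mpr (hinj.ne hij))
  have hmul := isMultiplicative_totientMulCardDivisors.map_prod _ univ hcoprime
  simp only [totientMulCardDivisors_apply, ← hfac] at hmul
  rw [hmul]
  exact prod_congr rfl fun i _ => Nat.sum_gcd_sub_one_prime_pow (hp i) (α i)

/-- Identity (4): for `n = ∏ pᵢ^{αᵢ}` (distinct primes, `αᵢ ≥ 1`),
`∏ᵢ ∑_{1 ≤ mᵢ ≤ pᵢ^{αᵢ}, pᵢ ∤ mᵢ} gcd(mᵢ-1, pᵢ^{αᵢ}) = φ(n) τ(n)`. -/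
theorem stmt3 (n : ℕ) (hn : 0 < n) (k : ℕ) (p : Fin k → ℕ) (hp : ∀ i, (p i).Prime)
    (hinj : Function.Injective p) (α : Fin k → ℕ) (hα : ∀ i, 1 ≤ α i)
    (hfac : n = ∏ i, p i ^ α i) :
    (∏ i, ∑ x ∈ (Finset.Icc 1 (p i ^ α i)).filter (fun x => ¬ p i ∣ x),
        Nat.gcd (x - 1) (p i ^ α i))
      = Nat.totient n * n.divisors.card :=
  stmt3_general n k p hp hinj α hfac
end

section
/- (Menon's identity.) For every positive integer $n$, $$\sum_{\substack{1 \le m \le n \\ \gcd(m,n) = 1}} \gcd(m - 1, n) \,=\, \varphi(n)\,\tau(n),$$ where $\varphi$ is Euler's totient function and $\tau(n)$ is the number of positive divisors of $n$. -/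
/-!
Write `gcd (m - 1) n = ∑_{d ∣ n, d ∣ m - 1} φ d` and swap the sums. For a divisor `d` of `n`, the
units `m` of `ZMod n` with `d ∣ m - 1` form the kernel of the surjection `(ZMod n)ˣ → (ZMod d)ˣ`,
so there are `φ n / φ d` of them. Each divisor therefore contributes exactly `φ n`.
-/

open Finset Nat

theorem MonoidHom.card_ker_mul_card_of_surjective {G H : Type*} [Group G] [Group H] (f : G →* H)
    (hf : Function.Surjective f) : Nat.card f.ker * Nat.card H = Nat.card G := by
  rw [← f.ker.card_mul_index, Subgroup.index_ker, f.range_eq_top_of_surjective hf,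
    Subgroup.card_top]

theorem Nat.gcd_eq_sum_totient_divisors_filter_dvd (k : ℕ) {n : ℕ} (hn : n ≠ 0) :
    Nat.gcd k n = ∑ d ∈ n.divisors with d ∣ k, φ d := by
  conv_lhs => rw [← Nat.sum_totient (Nat.gcd k n)]
  congr 1
  ext d
  simp [Nat.dvd_gcd_iff, hn, and_comm]

namespace ZMod

theorem val_natCast_sub_one_s4 {n m : ℕ} (hm : 1 ≤ m) (hmn : m ≤ n) :
    ((m : ZMod n) - 1).val = m - 1 := by
  rw [← Nat.cast_pred hm, val_natCast, Nat.mod_eq_of_lt (by omega)]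

theorem sum_Icc_coprime_eq_sum_units {M : Type*} [AddCommMonoid M] (n : ℕ) [NeZero n]
    (f : ZMod n → M) : ∑ m ∈ Icc 1 n with m.Coprime n, f m = ∑ u : (ZMod n)ˣ, f u := by
  -- `(u - 1).val + 1` is the representative of `u` in `[1, n]` (not `[0, n)`).
  refine sum_bij' (fun m hm => unitOfCoprime m (mem_filter.1 hm).2)
    (fun u _ => ((u : ZMod n) - 1).val + 1) (fun _ _ => mem_univ _) ?_ ?_ ?_ (fun _ _ => rfl)
  · intro u _
    have hcast : (((u : ZMod n) - 1).val + 1 : ℕ) = (u : ZMod n) := by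
      push_cast; rw [natCast_zmod_val, sub_add_cancel]
    simp only [mem_filter, mem_Icc]
    refine ⟨⟨by omega, val_lt _⟩, (isUnit_iff_coprime _ n).1 ?_⟩
    rw [hcast]; exact u.isUnit
  · intro m hm
    obtain ⟨⟨h1, hmn⟩, _⟩ := by simpa only [mem_filter, mem_Icc] using hm
    rw [coe_unitOfCoprime, val_natCast_sub_one_s4 h1 hmn]
    omega
  · intro u _
    ext
    simp [coe_unitOfCoprime]

theorem dvd_val_sub_one_iff_unitsMap_eq_one {n d : ℕ} [NeZero n] (hd : d ∣ n) (u : (ZMod n)ˣ) :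
    d ∣ ((u : ZMod n) - 1).val ↔ unitsMap hd u = 1 := by
  rw [← natCast_eq_zero_iff, natCast_val, cast_sub hd, cast_one hd, sub_eq_zero, Units.ext_iff,
    unitsMap_val, Units.val_one]

theorem card_unitsMap_eq_one_mul_totient {n d : ℕ} [NeZero n] (hd : d ∣ n) :
    #{u : (ZMod n)ˣ | unitsMap hd u = 1} * φ d = φ n := by
  have : NeZero d := ⟨fun h => NeZero.ne n (Nat.eq_zero_of_zero_dvd (h ▸ hd))⟩
  have h := (unitsMap hd).card_ker_mul_card_of_surjective (unitsMap_surjective hd)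
  have hker : Nat.card (unitsMap hd).ker = #{u : (ZMod n)ˣ | unitsMap hd u = 1} := by
    rw [Nat.card_eq_fintype_card, ← Fintype.card_subtype]
    exact Fintype.card_congr (Equiv.refl _)
  rwa [hker, Nat.card_eq_fintype_card, Nat.card_eq_fintype_card, card_units_eq_totient,
    card_units_eq_totient] at h

theorem sum_units_gcd_val_sub_one (n : ℕ) [NeZero n] :
    ∑ u : (ZMod n)ˣ, Nat.gcd ((u : ZMod n) - 1).val n = φ n * #n.divisors := by
  calc ∑ u : (ZMod n)ˣ, Nat.gcd ((u : ZMod n) - 1).val n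
      = ∑ u : (ZMod n)ˣ, ∑ d ∈ n.divisors with d ∣ ((u : ZMod n) - 1).val, φ d := by
        simp only [Nat.gcd_eq_sum_totient_divisors_filter_dvd _ (NeZero.ne n)]
    _ = ∑ d ∈ n.divisors, ∑ u : (ZMod n)ˣ with d ∣ (↑u - 1 : ZMod n).val, φ d :=
        sum_comm' (by simp [and_comm])
    _ = ∑ d ∈ n.divisors, φ n := by
        refine sum_congr rfl fun d hd => ?_
        have hd : d ∣ n := Nat.dvd_of_mem_divisors hd
        simp_rw [sum_const, smul_eq_mul, dvd_val_sub_one_iff_unitsMap_eq_one hd,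
          card_unitsMap_eq_one_mul_totient hd]
    _ = φ n * #n.divisors := by rw [sum_const, smul_eq_mul, mul_comm]

end ZMod

/-- Menon's identity: `∑_{1 ≤ m ≤ n, gcd(m,n)=1} gcd(m-1, n) = φ(n) τ(n)`. -/
theorem stmt4 (n : ℕ) (hn : 0 < n) :
    (∑ m ∈ (Finset.Icc 1 n).filter (fun m => Nat.gcd m n = 1), Nat.gcd (m - 1) n)
      = Nat.totient n * n.divisors.card := by
  have : NeZero n := ⟨hn.ne'⟩
  calc ∑ m ∈ Icc 1 n with m.Coprime n, Nat.gcd (m - 1) n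
      = ∑ m ∈ Icc 1 n with m.Coprime n, Nat.gcd ((m : ZMod n) - 1).val n := by
        refine sum_congr rfl fun m hm => ?_
        obtain ⟨⟨h1, hmn⟩, _⟩ := by simpa only [mem_filter, mem_Icc] using hm
        rw [ZMod.val_natCast_sub_one_s4 h1 hmn]
    _ = φ n * #n.divisors := by
        rw [ZMod.sum_Icc_coprime_eq_sum_units n (fun x => Nat.gcd (x - 1).val n),
          ZMod.sum_units_gcd_val_sub_one]
end

section
/- Let $G$ be a finite abelian group. Two elements $a, b \in G$ generate the same cyclic subgroup of $G$ if and only if there exists an automorphism $f$ of $G$ satisfying $f(H) = H$ for every subgroup $H \le G$ (a power automorphism) such that $f(a) = b$. -/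
/-!
If `a` and `b` generate the same cyclic subgroup, then `b = a ^ k` with `k` prime to the order
of `a`. Since the order of `a` divides `|G|`, the unit `k` of `ZMod (orderOf a)` lifts to a unit
`m` of `ZMod |G|`, and `x ↦ x ^ m` is then an automorphism of the abelian group `G` mapping `a`
to `b`; it fixes every subgroup because it maps each one injectively into itself. Conversely a
power automorphism `f` maps `⟨a⟩` to `⟨f a⟩` and also fixes it.
-/

open Subgroup

theorem Nat.exists_coprime_modEq_of_dvd {d n k : ℕ} [NeZero n] (hdn : d ∣ n) (hk : k.Coprime d) :
    ∃ m : ℕ, m.Coprime n ∧ m ≡ k [MOD d] := by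
  obtain ⟨u, hu⟩ := ZMod.unitsMap_surjective hdn (ZMod.unitOfCoprime k hk)
  refine ⟨(u : ZMod n).val, ZMod.val_coe_unit_coprime u, ?_⟩
  rw [← ZMod.natCast_eq_natCast_iff, ← ZMod.coe_unitOfCoprime k hk, ← hu, ZMod.unitsMap_def]
  simp [ZMod.castHom_apply]

theorem IsOfFinOrder.coprime_of_orderOf_pow_eq {G : Type*} [Monoid G] {x : G} {k : ℕ}
    (hx : IsOfFinOrder x) (h : orderOf (x ^ k) = orderOf x) : k.Coprime (orderOf x) := by
  rw [hx.orderOf_pow] at h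
  rcases Nat.div_eq_self.mp h with h0 | h1
  · exact absurd h0 hx.orderOf_pos.ne'
  · exact Nat.coprime_comm.mp h1

theorem exists_coprime_pow_eq_of_zpowers_eq {G : Type*} [Group G] [Finite G] {a b : G}
    (h : zpowers a = zpowers b) : ∃ m : ℕ, (Nat.card G).Coprime m ∧ a ^ m = b := by
  obtain ⟨k, rfl⟩ : b ∈ Submonoid.powers a :=
    mem_powers_iff_mem_zpowers.mpr (h ▸ mem_zpowers b)
  have hord : orderOf (a ^ k) = orderOf a := by rw [← Nat.card_zpowers, ← Nat.card_zpowers, h]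
  have hk := (isOfFinOrder_of_finite a).coprime_of_orderOf_pow_eq hord
  have : NeZero (Nat.card G) := ⟨Nat.card_pos.ne'⟩
  obtain ⟨m, hm, hmk⟩ := Nat.exists_coprime_modEq_of_dvd (orderOf_dvd_natCard a) hk
  exact ⟨m, Nat.coprime_comm.mp hm, pow_eq_pow_iff_modEq.mpr hmk⟩

noncomputable def powCoprimeMulEquiv {G : Type*} [CommGroup G] {m : ℕ}
    (h : (Nat.card G).Coprime m) : G ≃* G :=
  MulEquiv.ofBijective (powMonoidHom m) h.pow_left_bijective

theorem Subgroup.map_eq_self_of_injective_of_map_le {G : Type*} [Group G] [Finite G]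
    {f : G →* G} (hf : Function.Injective f) {H : Subgroup G} (hle : H.map f ≤ H) :
    H.map f = H :=
  eq_of_le_of_card_ge hle (card_map_of_injective hf).ge

theorem Subgroup.map_powCoprimeMulEquiv {G : Type*} [CommGroup G] [Finite G] {m : ℕ}
    (h : (Nat.card G).Coprime m) (H : Subgroup G) :
    H.map (powCoprimeMulEquiv h).toMonoidHom = H :=
  map_eq_self_of_injective_of_map_le (powCoprimeMulEquiv h).injective <| by
    rintro _ ⟨x, hx, rfl⟩
    exact H.pow_mem hx m

/-- In a finite abelian group, two elements generate the same cyclic subgroup iff some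
power automorphism (an automorphism fixing every subgroup setwise) maps one to the other. -/
theorem stmt5 (G : Type*) [CommGroup G] [Finite G] (a b : G) :
    Subgroup.zpowers a = Subgroup.zpowers b ↔
      ∃ f : G ≃* G, (∀ H : Subgroup G, H.map f.toMonoidHom = H) ∧ f a = b := by
  constructor
  · intro h
    obtain ⟨m, hm, hab⟩ := exists_coprime_pow_eq_of_zpowers_eq h
    exact ⟨powCoprimeMulEquiv hm, map_powCoprimeMulEquiv hm, hab⟩
  · rintro ⟨f, hf, rfl⟩
    calc zpowers a = (zpowers a).map f.toMonoidHom := (hf _).symm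
      _ = zpowers (f a) := f.toMonoidHom.map_zpowers a
end

section
/- Let $G$ be a finite abelian group and let $\mathrm{Pot}(G)$ denote the group of power automorphisms of $G$ (automorphisms fixing every subgroup setwise), acting naturally on $G$. Then the number of orbits of this action equals the number of cyclic subgroups of $G$. -/
open Subgroup

private lemma zpowers_isCyclic' {G : Type*} [Group G] (a : G) :
    IsCyclic (Subgroup.zpowers a) := by
  refine ⟨⟨⟨a, Subgroup.mem_zpowers a⟩, ?_⟩⟩
  rintro ⟨x, hx⟩
  obtain ⟨k, hk⟩ := hx
  exact ⟨k, Subtype.ext (by simpa using hk)⟩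

/-- The number of orbits of the natural action of the power automorphism group `Pot(G)`
on a finite abelian group `G` equals the number of cyclic subgroups of `G`. The orbit
space is formalized as the quotient of `G` by the relation `a ∼ b ↔ ∃ f ∈ Pot(G), f a = b`
(which is the orbit equivalence relation, since `Pot(G)` is a group). -/
theorem stmt6 (G : Type*) [CommGroup G] [Finite G] :
    Nat.card (Quot (fun a b : G => ∃ f : G ≃* G,
        (∀ H : Subgroup G, H.map f.toMonoidHom = H) ∧ f a = b))
      = Nat.card {H : Subgroup G // IsCyclic H} := by
  classical
  have hN : Nat.card G ≠ 0 := Nat.card_pos.ne'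
  haveI : NeZero (Nat.card G) := ⟨hN⟩
  apply Nat.card_congr
  refine Equiv.ofBijective
    (Quot.lift (fun a => (⟨Subgroup.zpowers a, zpowers_isCyclic' a⟩ :
      {H : Subgroup G // IsCyclic H})) ?_) ⟨?_, ?_⟩
  · rintro a b ⟨f, hf, rfl⟩
    exact Subtype.ext (((hf (Subgroup.zpowers a)).symm.trans
      (f.toMonoidHom.map_zpowers a)).symm).symm
  · rintro ⟨a⟩ ⟨b⟩ h
    have hz : Subgroup.zpowers a = Subgroup.zpowers b := congrArg Subtype.val h
    -- b is a natural power of a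
    have hb : b ∈ Subgroup.zpowers a := hz ▸ Subgroup.mem_zpowers b
    rw [← mem_powers_iff_mem_zpowers] at hb
    obtain ⟨k, hk'⟩ := hb
    have hk : a ^ k = b := hk'
    -- coprimality of k with the order of a
    have horder : orderOf b = orderOf a := by
      rw [← Nat.card_zpowers, ← Nat.card_zpowers, hz]
    have hcop : Nat.Coprime k (orderOf a) := by
      have h1 : orderOf (a ^ k) = orderOf a / Nat.gcd (orderOf a) k := orderOf_pow a
      rw [hk, horder] at h1
      have hpos : orderOf a ≠ 0 := (orderOf_pos a).ne'
      have := (Nat.div_eq_self.mp h1.symm).resolve_left hpos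
      exact Nat.coprime_comm.mp this
    -- lift k to an n coprime to |G| with n ≡ k mod orderOf a
    have hdvd : orderOf a ∣ Nat.card G := orderOf_dvd_natCard a
    obtain ⟨u, hu⟩ := ZMod.unitsMap_surjective hdvd (ZMod.unitOfCoprime k hcop)
    set n : ℕ := (u : ZMod (Nat.card G)).val with hn
    have hncop : (Nat.card G).Coprime n := (ZMod.val_coe_unit_coprime u).symm
    have hmod : (n : ZMod (orderOf a)) = (k : ZMod (orderOf a)) := by
      have := congrArg (Units.val) hu
      rw [ZMod.unitsMap_def] at this
      simp only [Units.coe_map, MonoidHom.coe_coe, ZMod.coe_unitOfCoprime] at this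
      rw [hn, ZMod.natCast_val, ← ZMod.castHom_apply (h := hdvd), this]
    have hab : a ^ n = b := by
      rw [← hk, pow_eq_pow_iff_modEq, ← ZMod.natCast_eq_natCast_iff]
      exact hmod
    -- the power automorphism x ↦ x ^ n
    have hbij : Function.Bijective (powMonoidHom n : G →* G) := (powCoprime hncop).bijective
    let f : G ≃* G := MulEquiv.ofBijective (powMonoidHom n) hbij
    have hfH : ∀ H : Subgroup G, H.map f.toMonoidHom = H := by
      intro H
      apply Subgroup.eq_of_le_of_card_ge
      · rintro x ⟨y, hy, rfl⟩
        exact pow_mem hy n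
      · exact le_of_eq (Nat.card_congr
          (H.equivMapOfInjective f.toMonoidHom f.injective).toEquiv)
    exact Quot.sound ⟨f, hfH, hab⟩
  · rintro ⟨H, hH⟩
    obtain ⟨g, hgen⟩ := hH.exists_generator
    refine ⟨Quot.mk _ (g : G), Subtype.ext ?_⟩
    refine le_antisymm ((Subgroup.zpowers_le).mpr g.2) ?_
    intro x hx
    obtain ⟨k, hk⟩ := hgen ⟨x, hx⟩
    exact ⟨k, by simpa using congrArg Subtype.val hk⟩
end

section
/- Let $G$ be a finite abelian group. Then the number of power automorphisms of $G$ (automorphisms $f$ with $f(H) = H$ for every subgroup $H \le G$) equals $\varphi(\exp(G))$, where $\exp(G)$ is the exponent of $G$ and $\varphi$ is Euler's totient function. -/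
open Subgroup

section Helpers

variable {G : Type*} [CommGroup G] [Finite G]

private lemma zpow_eq_of_zmod {a b : ℤ}
    (h : (a : ZMod (Monoid.exponent G)) = (b : ZMod (Monoid.exponent G))) (x : G) :
    x ^ a = x ^ b := by
  have hmod : a ≡ b [ZMOD (Monoid.exponent G)] := (ZMod.intCast_eq_intCast_iff _ _ _).mp h
  have hdvd : ((Monoid.exponent G : ℕ) : ℤ) ∣ b - a := Int.ModEq.dvd hmod
  have hox : ((orderOf x : ℕ) : ℤ) ∣ b - a :=
    dvd_trans (Int.natCast_dvd_natCast.mpr (Monoid.order_dvd_exponent x)) hdvd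
  have h1 : x ^ (b - a) = 1 := orderOf_dvd_iff_zpow_eq_one.mp hox
  have h2 : x ^ b / x ^ a = 1 := by rw [div_eq_mul_inv, ← zpow_sub, h1]
  exact (div_eq_one.mp h2).symm

private lemma pow_eq_of_zmod {a b : ℕ}
    (h : (a : ZMod (Monoid.exponent G)) = (b : ZMod (Monoid.exponent G))) (x : G) :
    x ^ a = x ^ b := by
  have := zpow_eq_of_zmod (G := G) (a := (a : ℤ)) (b := (b : ℤ)) (by push_cast; exact_mod_cast h) x
  simpa [zpow_natCast] using this

/-- Key uniformity lemma: a power automorphism of a finite abelian group is a universal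
power map, with exponent determined by its action on an element of maximal order. -/
private lemma uniform (f : G ≃* G)
    (hf : ∀ H : Subgroup G, H.map f.toMonoidHom = H)
    {g : G} (hg : orderOf g = Monoid.exponent G) {n : ℤ} (hn : f g = g ^ n)
    (x : G) : f x = x ^ n := by
  have fmem : ∀ y : G, f y ∈ zpowers y := by
    intro y
    have : f.toMonoidHom y ∈ (zpowers y).map f.toMonoidHom :=
      Subgroup.mem_map_of_mem _ (mem_zpowers y)
    rwa [hf] at this
  set e := Monoid.exponent G with hE
  have he : e ≠ 0 := Monoid.exponent_ne_zero_of_finite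
  set d := orderOf x with hD
  have hd : d ∣ e := Monoid.order_dvd_exponent x
  have hd0 : 0 < d := orderOf_pos x
  -- minimal s with x^s ∈ ⟨g⟩
  have hex : ∃ i, 0 < i ∧ x ^ i ∈ zpowers g :=
    ⟨d, hd0, by rw [hD, pow_orderOf_eq_one]; exact one_mem _⟩
  set s := Nat.find hex with hS
  obtain ⟨hs0, hsmem⟩ := Nat.find_spec hex
  have hdvd : ∀ i : ℕ, x ^ i ∈ zpowers g → s ∣ i := by
    intro i hi
    rcases Nat.eq_zero_or_pos (i % s) with h0 | hpos
    · exact Nat.dvd_of_mod_eq_zero h0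
    · exfalso
      have hlt : i % s < s := Nat.mod_lt _ hs0
      have hmem : x ^ (i % s) ∈ zpowers g := by
        have hxi : x ^ (i % s) * (x ^ s) ^ (i / s) = x ^ i := by
          rw [← pow_mul, ← pow_add, Nat.mod_add_div]
        rw [eq_mul_inv_of_mul_eq hxi]
        exact mul_mem hi (inv_mem (pow_mem hsmem _))
      exact Nat.find_min hex hlt ⟨hpos, hmem⟩
  have hsd : s ∣ d := hdvd d (by rw [hD, pow_orderOf_eq_one]; exact one_mem _)
  have hdvdz : ∀ i : ℤ, x ^ i ∈ zpowers g → (s : ℤ) ∣ i := by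
    intro i hi
    have hxd : x ^ (d : ℤ) = 1 := by
      rw [zpow_natCast]; exact pow_orderOf_eq_one x
    have hdz : ((d : ℤ)) ≠ 0 := Int.natCast_ne_zero.mpr hd0.ne'
    have hnn : 0 ≤ i % (d : ℤ) := Int.emod_nonneg i hdz
    have hrew : x ^ i = x ^ ((i % (d : ℤ)).toNat) := by
      conv_lhs => rw [← Int.mul_ediv_add_emod i (d : ℤ)]
      rw [zpow_add, zpow_mul, hxd, one_zpow, one_mul, ← zpow_natCast x,
        Int.toNat_of_nonneg hnn]
    have hmem : x ^ ((i % (d : ℤ)).toNat) ∈ zpowers g := by rw [← hrew]; exact hi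
    have h2 : (s : ℤ) ∣ i % (d : ℤ) := by
      have h3 : (s : ℤ) ∣ (((i % (d : ℤ)).toNat : ℕ) : ℤ) :=
        Int.natCast_dvd_natCast.mpr (hdvd _ hmem)
      rwa [Int.toNat_of_nonneg hnn] at h3
    have h4 : (s : ℤ) ∣ d * (i / d) :=
      Dvd.dvd.mul_right (Int.natCast_dvd_natCast.mpr hsd) _
    calc (s : ℤ) ∣ d * (i / d) + i % d := dvd_add h4 h2
      _ = i := Int.mul_ediv_add_emod i d
  obtain ⟨r, hr0⟩ := hsmem
  have hr : g ^ r = x ^ s := hr0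
  -- t = g ^ (e/d) has order d
  set t := g ^ (e / d) with hT
  have htord : orderOf t = d := by
    rw [hT, orderOf_pow, hg, Nat.gcd_eq_right (Nat.div_dvd_of_dvd hd), Nat.div_div_self hd he]
  -- e ∣ r * (d/s), so r = (e/d)*s * j₀
  have hds0 : 0 < d / s := Nat.div_pos (Nat.le_of_dvd hd0 hsd) hs0
  have h1 : g ^ (r * ((d / s : ℕ) : ℤ)) = 1 := by
    rw [zpow_mul, hr, zpow_natCast, ← pow_mul, Nat.mul_div_cancel' hsd, hD,
      pow_orderOf_eq_one]
  have h2 : (e : ℤ) ∣ r * ((d / s : ℕ) : ℤ) := by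
    rw [← hg]; exact orderOf_dvd_iff_zpow_eq_one.mpr h1
  have heds : ((e / d) * s) * (d / s) = e := by
    rw [mul_assoc, Nat.mul_div_cancel' hsd, Nat.div_mul_cancel hd]
  have h3 : (((e / d) * s : ℕ) : ℤ) ∣ r := by
    have h2' : (((e / d) * s : ℕ) : ℤ) * ((d / s : ℕ) : ℤ) ∣ r * ((d / s : ℕ) : ℤ) := by
      rw [← Nat.cast_mul, heds]; exact h2
    exact (mul_dvd_mul_iff_right (by exact_mod_cast hds0.ne' : ((d / s : ℕ) : ℤ) ≠ 0)).mp h2'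
  obtain ⟨j₀, hj₀⟩ := h3
  -- x^s = t^(s*j₀)
  have hxs : x ^ (s : ℤ) = t ^ ((s : ℤ) * j₀) := by
    rw [hT, ← zpow_natCast g (e / d), ← zpow_mul]
    have : ((e / d : ℕ) : ℤ) * ((s : ℤ) * j₀) = r := by
      rw [hj₀]; push_cast; ring
    rw [this, hr, zpow_natCast]

  -- replace j₀ by a natural number j₁ with j₁ ≡ j₀ mod (d/s)
  have hdsz : ((d / s : ℕ) : ℤ) ≠ 0 := Int.natCast_ne_zero.mpr hds0.ne'
  set j₁ : ℕ := (j₀ % ((d / s : ℕ) : ℤ)).toNat with hJ₁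
  have hj₁ : (j₁ : ℤ) = j₀ % ((d / s : ℕ) : ℤ) :=
    Int.toNat_of_nonneg (Int.emod_nonneg _ hdsz)
  have hdiff : ((d : ℕ) : ℤ) ∣ (s : ℤ) * j₀ - (s : ℤ) * j₁ := by
    have h5 : j₀ - (j₁ : ℤ) = ((d / s : ℕ) : ℤ) * (j₀ / ((d / s : ℕ) : ℤ)) := by
      have := Int.mul_ediv_add_emod j₀ ((d / s : ℕ) : ℤ)
      rw [hj₁]; linarith
    have h6 : (s : ℤ) * ((d / s : ℕ) : ℤ) = ((d : ℕ) : ℤ) := by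
      exact_mod_cast congrArg (Nat.cast : ℕ → ℤ) (Nat.mul_div_cancel' hsd)
    exact ⟨j₀ / ((d / s : ℕ) : ℤ), by rw [← mul_sub, h5, ← mul_assoc, h6]⟩
  have hxz1 : t ^ ((s : ℤ) * j₁) = t ^ ((s : ℤ) * j₀) := by
    have h6 : ((orderOf t : ℕ) : ℤ) ∣ (s : ℤ) * j₀ - (s : ℤ) * j₁ := by
      rw [htord]; exact hdiff
    have h7 : t ^ ((s : ℤ) * j₀ - (s : ℤ) * j₁) = 1 := orderOf_dvd_iff_zpow_eq_one.mp h6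
    have h8 : t ^ ((s : ℤ) * j₀) / t ^ ((s : ℤ) * j₁) = 1 := by
      rw [div_eq_mul_inv, ← zpow_sub, h7]
    exact (div_eq_one.mp h8).symm
  have hxs1 : x ^ s = t ^ (s * j₁) := by
    rw [← zpow_natCast t, Nat.cast_mul, hxz1, ← hxs, zpow_natCast]
  -- coprimality of j₁ and d/s
  have hordxs : orderOf (x ^ s) = d / s := by
    rw [orderOf_pow, ← hD, Nat.gcd_eq_right hsd]
  have hgcd : Nat.gcd (d / s) j₁ = 1 := by
    have h9 : orderOf (t ^ (s * j₁)) = d / Nat.gcd d (s * j₁) := by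
      rw [orderOf_pow, htord]
    have h10 : d / Nat.gcd d (s * j₁) = d / s := by rw [← h9, ← hxs1, hordxs]
    have h11 : Nat.gcd d (s * j₁) ∣ d := Nat.gcd_dvd_left _ _
    have h12 : Nat.gcd d (s * j₁) = s := by
      have h12a : d / (d / Nat.gcd d (s * j₁)) = d / (d / s) := by rw [h10]
      rwa [Nat.div_div_self h11 hd0.ne', Nat.div_div_self hsd hd0.ne'] at h12a
    have h14 : Nat.gcd (s * (d / s)) (s * j₁) = s * Nat.gcd (d / s) j₁ :=
      Nat.gcd_mul_left s _ _
    rw [Nat.mul_div_cancel' hsd, h12] at h14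
    exact (Nat.eq_of_mul_eq_mul_left hs0 (by rw [mul_one, ← h14])).symm
  have hcop : Nat.Coprime j₁ (d / s) := Nat.coprime_comm.mp hgcd
  -- lift j₁ to j coprime to e
  have hdse : (d / s) ∣ e := dvd_trans (Nat.div_dvd_of_dvd hsd) hd
  haveI : NeZero e := ⟨he⟩
  obtain ⟨J, hJ⟩ := ZMod.unitsMap_surjective (n := d / s) (m := e) hdse
    (ZMod.unitOfCoprime j₁ hcop)
  set j := (J : ZMod e).val with hj
  have hje : Nat.Coprime j e := ZMod.val_coe_unit_coprime J
  have hjmod : ((j : ℕ) : ZMod (d / s)) = ((j₁ : ℕ) : ZMod (d / s)) := by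
    have h16 : ((ZMod.unitsMap hdse J : (ZMod (d / s))ˣ) : ZMod (d / s))
        = ((j₁ : ℕ) : ZMod (d / s)) := by
      rw [hJ, ZMod.coe_unitOfCoprime]
    rw [← h16]
    simp only [ZMod.unitsMap_def, Units.coe_map, MonoidHom.coe_coe, ZMod.castHom_apply]
    exact ZMod.natCast_val _
  have hjj₁ : j ≡ j₁ [MOD d / s] := (ZMod.natCast_eq_natCast_iff _ _ _).mp hjmod
  have hxs2 : x ^ s = t ^ (s * j) := by
    rw [hxs1]
    have hsmod : s * j₁ ≡ s * j [MOD d] := by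
      have := Nat.ModEq.mul_left' (c := s) hjj₁.symm
      rwa [Nat.mul_div_cancel' hsd] at this
    rw [pow_eq_pow_iff_modEq, htord]; exact hsmod
  -- v has trivial intersection with ⟨g⟩
  set v := x * (t ^ j)⁻¹ with hV
  have htjz : ∀ k : ℤ, (t ^ j) ^ k ∈ zpowers g := by
    intro k
    rw [hT]
    exact zpow_mem (pow_mem (pow_mem (mem_zpowers g) _) _) _
  have hvs : v ^ s = 1 := by
    have h17 : v ^ s = x ^ s * ((t ^ j) ^ s)⁻¹ := by rw [hV, mul_pow, inv_pow]
    rw [h17, ← pow_mul, mul_comm j s, ← hxs2, mul_inv_cancel]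
  have hvd : ∀ i : ℤ, v ^ i ∈ zpowers g → v ^ i = 1 := by
    intro i hi
    have hxi : x ^ i ∈ zpowers g := by
      have hxv : x ^ i = v ^ i * (t ^ j) ^ i := by
        rw [← mul_zpow, hV, inv_mul_cancel_right]
      rw [hxv]
      exact mul_mem hi (htjz i)
    obtain ⟨q, hq⟩ := hdvdz i hxi
    rw [hq, zpow_mul]
    rw [show v ^ (s : ℤ) = 1 by rw [zpow_natCast, hvs], one_zpow]
  -- final computation
  obtain ⟨m, hm0⟩ := fmem x
  have hm : x ^ m = f x := hm0
  obtain ⟨m', hm'0⟩ := fmem v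
  have hm' : v ^ m' = f v := hm'0
  have hft : f (t ^ j) = (t ^ j) ^ (n : ℤ) := by
    have h17 : t ^ j = g ^ (e / d * j) := by rw [hT, ← pow_mul]
    rw [h17, map_pow, hn, ← zpow_natCast (g ^ n) (e / d * j), ← zpow_mul,
      mul_comm n ((e / d * j : ℕ) : ℤ), zpow_mul, zpow_natCast]
  have hxvt : x = v * t ^ j := by rw [hV, inv_mul_cancel_right]
  have h18 : f x = v ^ m' * (t ^ j) ^ (n : ℤ) := by
    rw [hxvt, map_mul, ← hm', hft]
  have e1 : v ^ m * (t ^ j) ^ m = v ^ m' * (t ^ j) ^ (n : ℤ) := by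
    calc v ^ m * (t ^ j) ^ m = (v * t ^ j) ^ m := (mul_zpow _ _ _).symm
      _ = x ^ m := by rw [← hxvt]
      _ = f x := hm
      _ = v ^ m' * (t ^ j) ^ (n : ℤ) := h18
  have key : v ^ (m - m') = (t ^ j) ^ (n - m) := by
    rw [zpow_sub, zpow_sub, ← div_eq_mul_inv, ← div_eq_mul_inv,
      div_eq_div_iff_mul_eq_mul, e1]
    exact mul_comm _ _
  have hv1 : v ^ (m - m') = 1 := hvd _ (by rw [key]; exact htjz _)
  have ht1 : (t ^ j) ^ (n - m) = 1 := by rw [← key, hv1]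
  have h19 : t ^ ((j : ℤ) * (n - m)) = 1 := by
    rw [zpow_mul, zpow_natCast, ht1]
  have h20 : ((d : ℕ) : ℤ) ∣ (j : ℤ) * (n - m) := by
    have := orderOf_dvd_iff_zpow_eq_one.mpr h19
    rwa [htord] at this
  have hcopjd : IsCoprime ((j : ℕ) : ℤ) ((d : ℕ) : ℤ) := by
    rw [Int.isCoprime_iff_gcd_eq_one]
    exact_mod_cast Nat.Coprime.coprime_dvd_right hd hje
  have h21 : ((d : ℕ) : ℤ) ∣ (n - m) := hcopjd.symm.dvd_of_dvd_mul_left h20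
  have h22 : x ^ (n - m) = 1 := orderOf_dvd_iff_zpow_eq_one.mp (by rw [← hD]; exact h21)
  rw [← hm]
  have h23 : x ^ n / x ^ m = 1 := by rw [div_eq_mul_inv, ← zpow_sub, h22]
  exact (div_eq_one.mp h23).symm

end Helpers

/-- The number of power automorphisms of a finite abelian group `G` equals
`φ(exp G)`. -/
theorem stmt7 (G : Type*) [CommGroup G] [Finite G] :
    Nat.card {f : G ≃* G // ∀ H : Subgroup G, H.map f.toMonoidHom = H}
      = Nat.totient (Monoid.exponent G) := by
  classical
  set e := Monoid.exponent G with hE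
  have he : e ≠ 0 := Monoid.exponent_ne_zero_of_finite
  haveI : NeZero e := ⟨he⟩
  obtain ⟨g, hg⟩ := Monoid.exists_orderOf_eq_exponent (Monoid.ExponentExists.of_finite (G := G))
  -- key power identity for units
  have hval : ∀ u : (ZMod e)ˣ, ∀ x : G,
      (x ^ (u : ZMod e).val) ^ ((u⁻¹ : (ZMod e)ˣ) : ZMod e).val = x := by
    intro u x
    rw [← pow_mul]
    have hcast : (((u : ZMod e).val * ((u⁻¹ : (ZMod e)ˣ) : ZMod e).val : ℕ) : ZMod e)
        = ((1 : ℕ) : ZMod e) := by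
      push_cast
      rw [ZMod.natCast_val, ZMod.natCast_val, ZMod.cast_id, ZMod.cast_id, Units.mul_inv]
    have := pow_eq_of_zmod hcast x
    rw [this, pow_one]
  -- the power map associated to a unit
  let Φ : (ZMod e)ˣ → {f : G ≃* G // ∀ H : Subgroup G, H.map f.toMonoidHom = H} := fun u =>
    ⟨{ toFun := fun x => x ^ (u : ZMod e).val
       invFun := fun x => x ^ ((u⁻¹ : (ZMod e)ˣ) : ZMod e).val
       left_inv := fun x => hval u x
       right_inv := fun x => by simpa using hval u⁻¹ x
       map_mul' := fun a b => mul_pow a b _ },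
     fun H => by
       ext y
       constructor
       · rintro ⟨z, hz, rfl⟩
         exact pow_mem hz _
       · intro hy
         exact ⟨y ^ ((u⁻¹ : (ZMod e)ˣ) : ZMod e).val, pow_mem hy _,
           by simpa using hval u⁻¹ y⟩⟩
  have hinj : Function.Injective Φ := by
    intro u u' h
    have h1 : (Φ u).val g = (Φ u').val g := by rw [h]
    have hgu : g ^ (u : ZMod e).val = g ^ (u' : ZMod e).val := h1
    have hmod : (u : ZMod e).val ≡ (u' : ZMod e).val [MOD e] := by
      have := pow_eq_pow_iff_modEq.mp hgu
      rwa [hg] at this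
    have hvals : (u : ZMod e).val = (u' : ZMod e).val := by
      have h2 := hmod
      rwa [Nat.ModEq, Nat.mod_eq_of_lt (ZMod.val_lt _), Nat.mod_eq_of_lt (ZMod.val_lt _)] at h2
    exact Units.ext (ZMod.val_injective e hvals)
  have hsurj : Function.Surjective Φ := by
    rintro ⟨f, hfp⟩
    have fmem : ∀ y : G, f y ∈ Subgroup.zpowers y := by
      intro y
      have : f.toMonoidHom y ∈ (Subgroup.zpowers y).map f.toMonoidHom :=
        Subgroup.mem_map_of_mem _ (Subgroup.mem_zpowers y)
      rwa [hfp] at this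
    obtain ⟨n, hn0⟩ := fmem g
    have hn : f g = g ^ n := hn0.symm
    have huni : ∀ x, f x = x ^ n := uniform f hfp hg hn
    have hgmem : g ∈ (Subgroup.zpowers g).map f.toMonoidHom := by
      rw [hfp]; exact Subgroup.mem_zpowers g
    obtain ⟨z, hz, hfz⟩ := hgmem
    obtain ⟨a, haz0⟩ := hz
    have haz : g ^ a = z := haz0
    have hga : g ^ (n * a) = g := by
      calc g ^ (n * a) = (g ^ a) ^ n := by rw [mul_comm, zpow_mul]
        _ = z ^ n := by rw [haz]
        _ = f z := (huni z).symm
        _ = g := hfz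
    have hd1 : (e : ℤ) ∣ n * a - 1 := by
      have h3 : g ^ (n * a - 1) = 1 := by
        rw [zpow_sub, hga, zpow_one, mul_inv_cancel]
      have h2 := orderOf_dvd_iff_zpow_eq_one.mpr h3
      rwa [hg] at h2
    have hmul1 : ((n : ℤ) : ZMod e) * ((a : ℤ) : ZMod e) = 1 := by
      have h4 : ((n * a - 1 : ℤ) : ZMod e) = 0 := by
        rw [ZMod.intCast_zmod_eq_zero_iff_dvd]; exact_mod_cast hd1
      push_cast at h4
      have h5 := sub_eq_zero.mp h4
      exact_mod_cast h5
    refine ⟨⟨((n : ℤ) : ZMod e), ((a : ℤ) : ZMod e), hmul1, by rw [mul_comm]; exact hmul1⟩, ?_⟩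
    apply Subtype.ext
    apply MulEquiv.ext
    intro x
    show x ^ (((n : ℤ) : ZMod e)).val = f x
    rw [huni x]
    have hcast : (((((n : ℤ) : ZMod e)).val : ℤ) : ZMod e) = ((n : ℤ) : ZMod e) := by
      push_cast
      rw [ZMod.natCast_val, ZMod.cast_id]
    have h5 := zpow_eq_of_zmod hcast x
    rw [← zpow_natCast x ((((n : ℤ) : ZMod e)).val)]
    exact h5
  have hcard := Nat.card_eq_of_bijective Φ ⟨hinj, hsurj⟩
  rw [← hcard, Nat.card_eq_fintype_card, ZMod.card_units_eq_totient]
end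

section
/- Every power automorphism of a finite abelian group is universal: if $G$ is a finite abelian group and $f$ is an automorphism of $G$ with $f(H) = H$ for every subgroup $H \le G$, then there exists an integer $m$ such that $f(x) = mx$ for all $x \in G$ (writing $G$ additively). -/
/-- Every power automorphism of a finite abelian group (written additively) is
universal: there is an integer `m` with `f x = m • x` for all `x`. -/
theorem stmt8 (G : Type*) [AddCommGroup G] [Finite G] (f : G ≃+ G)
    (hf : ∀ H : AddSubgroup G, H.map f.toAddMonoidHom = H) :
    ∃ m : ℤ, ∀ x : G, f x = m • x := by
  -- Step 1: every element is sent to an integer multiple of itself.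
  have hpow : ∀ x : G, ∃ k : ℤ, f x = k • x := by
    intro x
    have hx : f x ∈ AddSubgroup.zmultiples x := by
      rw [← hf (AddSubgroup.zmultiples x)]
      exact AddSubgroup.mem_map_of_mem _ (AddSubgroup.mem_zmultiples x)
    obtain ⟨k, hk⟩ := AddSubgroup.mem_zmultiples_iff.mp hx
    exact ⟨k, hk.symm⟩
  -- Pick g of order equal to the exponent n.
  have hee : AddMonoid.ExponentExists G := AddMonoid.ExponentExists.of_finite
  obtain ⟨g, hg⟩ := AddMonoid.exists_addOrderOf_eq_exponent hee
  set n : ℕ := AddMonoid.exponent G with hn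
  have hn0 : (n : ℤ) ≠ 0 := by exact_mod_cast hee.exponent_ne_zero
  have hordg : ∀ k : ℤ, k • g = 0 ↔ (n : ℤ) ∣ k := by
    intro k
    rw [← addOrderOf_dvd_iff_zsmul_eq_zero, hg]
  obtain ⟨a, ha⟩ := hpow g
  refine ⟨a, fun y => ?_⟩
  -- The subgroup of integers k with k • y ∈ ⟨g⟩.
  set T : AddSubgroup ℤ :=
    (AddSubgroup.zmultiples g).comap ((zmultiplesHom G) y) with hT
  have hmemT : ∀ k : ℤ, k ∈ T ↔ k • y ∈ AddSubgroup.zmultiples g := fun k => Iff.rfl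
  obtain ⟨t, ht⟩ := Int.subgroup_cyclic T
  have htmem : ∀ k : ℤ, k ∈ T ↔ t ∣ k := by
    intro k
    rw [ht]
    constructor
    · intro h
      obtain ⟨c, hc⟩ := AddSubgroup.mem_closure_singleton.mp h
      exact ⟨c, by rw [← hc, smul_eq_mul]; ring⟩
    · rintro ⟨c, rfl⟩
      exact AddSubgroup.mem_closure_singleton.mpr ⟨c, by rw [smul_eq_mul]; ring⟩
  -- n ∈ T, so t ∣ n, in particular t ≠ 0.
  have hnY : (n : ℤ) • y = 0 := by
    exact_mod_cast AddMonoid.exponent_nsmul_eq_zero y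
  have hnT : (n : ℤ) ∈ T := by
    rw [hmemT, hnY]; exact zero_mem _
  have htn : t ∣ (n : ℤ) := (htmem _).mp hnT
  have ht0 : t ≠ 0 := by rintro rfl; exact hn0 (zero_dvd_iff.mp htn)
  -- t • y = s • g for some s, and t ∣ s.
  have htT : t ∈ T := (htmem t).mpr dvd_rfl
  obtain ⟨s, hs⟩ := AddSubgroup.mem_zmultiples_iff.mp ((hmemT t).mp htT)
  obtain ⟨u, hu⟩ := htn
  have hu0 : u ≠ 0 := by rintro rfl; rw [mul_zero] at hu; exact hn0 hu
  have hus : (u * s) • g = 0 := by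
    rw [mul_smul, hs, ← mul_smul, mul_comm, ← hu, hnY]
  have hts : t ∣ s := by
    have hnus : (n : ℤ) ∣ u * s := (hordg _).mp hus
    rw [hu] at hnus
    exact (mul_dvd_mul_iff_left hu0).mp (by rwa [mul_comm t u] at hnus)
  obtain ⟨s', hs'⟩ := hts
  -- w := y - s' • g satisfies t • w = 0.
  set w : G := y - s' • g with hw
  have htw : t • w = 0 := by
    rw [hw, smul_sub, ← mul_smul, ← hs', hs, sub_self]
  obtain ⟨b, hb⟩ := hpow w
  obtain ⟨c, hc⟩ := hpow (g + w)
  -- key equation : (a - c) • g = (c - b) • w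
  have hkey : (a - c) • g = (c - b) • w := by
    have : a • g + b • w = c • g + c • w := by
      rw [← ha, ← hb, ← map_add f, hc, smul_add]
    rw [sub_smul, sub_smul]
    rw [sub_eq_sub_iff_add_eq_add]
    linear_combination (norm := abel) this
  -- c - b ∈ T since (c-b) • y ∈ ⟨g⟩
  have hcbT : (c - b) ∈ T := by
    rw [hmemT]
    have hy : y = s' • g + w := by rw [hw]; abel
    rw [hy, smul_add, ← hkey, ← mul_smul]
    exact add_mem (AddSubgroup.zsmul_mem _ (AddSubgroup.mem_zmultiples g) _)
      (AddSubgroup.zsmul_mem _ (AddSubgroup.mem_zmultiples g) _)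
  have hcbw : (c - b) • w = 0 := by
    obtain ⟨q, hq⟩ := (htmem _).mp hcbT
    rw [hq, mul_comm, mul_smul, htw, smul_zero]
  have hacg : (a - c) • g = 0 := by rw [hkey, hcbw]
  have hacw : (a - c) • w = 0 := by
    have : t ∣ a - c := Dvd.dvd.trans (⟨u, hu⟩ : t ∣ (n:ℤ)) ((hordg _).mp hacg)
    obtain ⟨q, hq⟩ := this
    rw [hq, mul_comm, mul_smul, htw, smul_zero]
  -- conclude
  have hbw : b • w = a • w := by
    have h1 : c • w = b • w := by
      have := hcbw; rw [sub_smul, sub_eq_zero] at this; exact this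
    have h2 : a • w = c • w := by
      have := hacw; rw [sub_smul, sub_eq_zero] at this; exact this
    rw [h1.symm, h2]
  have hy : y = s' • g + w := by rw [hw]; abel
  rw [hy, map_add f, map_zsmul, ha, hb, hbw, smul_add, ← mul_smul, ← mul_smul, mul_comm]
end
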